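/- arXiv:math-ph/0510093 — 5 statements merged into one kernel-verified Lean document; each statement's English description precedes it below -/
import Mathlib

section
/- For a finite set Λ of sites and a collection of real spin-spin couplings J_{u,v}, the partition function Z = 2^{-|Λ|} ∑_{φ ∈ {±1}^Λ} exp(p ∑_{{u,v}⊂Λ} J_{u,v} φ_u φ_v) equals ∑_{n : B_Λ → ℤ_{≥0}} (∏_b (pJ_b)^{n_b}/n_b!) · 1[∂n = ∅], where B_Λ is the set of pairs {u,v} ⊂ Λ and ∂n is the set of sites v at which ∑_{b ∋ v} n_b is odd. -/
open scoped BigOperators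

/-- The set of bonds of a finite site set `Λ`: unordered pairs `{u,v} ⊂ Λ`,
encoded as ordered pairs `u < v`. -/
abbrev Bonds (Λ : Type) [LinearOrder Λ] : Type := {b : Λ × Λ // b.1 < b.2}

/-- The spin value `±1` of a spin configuration at a site. -/
def sp {Λ : Type} (φ : Λ → Bool) (v : Λ) : ℝ := if φ v then 1 else -1


set_option maxHeartbeats 2000000 in

lemma hasSum_pi_prod (ι : Type) [Fintype ι] :
    ∀ (f : ι → ℕ → ℝ), (∀ i, Summable fun n => |f i n|) →
      HasSum (fun n : ι → ℕ => ∏ i, f i (n i)) (∏ i, ∑' n, f i n) := by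
  refine Fintype.induction_empty_option
    (P := fun α [Fintype α] => ∀ (f : α → ℕ → ℝ), (∀ i, Summable fun n => |f i n|) →
      HasSum (fun n : α → ℕ => ∏ i, f i (n i)) (∏ i, ∑' n, f i n)) ?_ ?_ ?_ ι
  · intro α β _ e ih f hf
    letI : Fintype α := Fintype.ofEquiv β e.symm
    have key := ih (fun a k => f (e a) k) fun a => hf (e a)
    set E := e.arrowCongr (Equiv.refl ℕ) with hEdef
    have hE : (fun n : β → ℕ => ∏ b, f b (n b)) ∘ E
        = fun m : α → ℕ => ∏ a, f (e a) (m a) := by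
      funext m
      rw [Function.comp_apply,
        ← Equiv.prod_comp e (fun b => f b (E m b))]
      refine Finset.prod_congr rfl fun a _ => ?_
      simp [hEdef, Equiv.arrowCongr]
    have h2 : HasSum ((fun n : β → ℕ => ∏ b, f b (n b)) ∘ E)
        (∏ a : α, ∑' n, f (e a) n) := by rw [hE]; exact key
    have h3 := (Equiv.hasSum_iff E).mp h2
    rwa [Equiv.prod_comp e (fun b => ∑' n, f b n)] at h3
  · intro f hf
    simp only [Finset.univ_eq_empty, Finset.prod_empty]
    exact hasSum_unique (fun _ => (1 : ℝ))
  · intro α _ ih f hf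
    have key := ih (fun a k => f (some a) k) fun a => hf (some a)
    have keyabs := ih (fun a k => |f (some a) k|) fun a => by
      simpa [abs_abs] using hf (some a)
    have hnone : HasSum (fun k => f none k) (∑' k, f none k) :=
      ((hf none).of_abs).hasSum
    have hmul : Summable (fun x : ℕ × (α → ℕ) =>
        f none x.1 * ∏ a, f (some a) (x.2 a)) := by
      refine summable_mul_of_summable_norm (f := fun k => f none k)
        (g := fun m : α → ℕ => ∏ a, f (some a) (m a)) ?_ ?_
      · simpa [Real.norm_eq_abs] using hf none
      · refine keyabs.summable.congr fun m => ?_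
        simp [Real.norm_eq_abs, Finset.abs_prod]
    have hS := hnone.mul key hmul
    set E : (Option α → ℕ) ≃ ℕ × (α → ℕ) :=
      Equiv.piOptionEquivProd (β := fun _ => ℕ) with hEdef
    have hfun : (fun n : Option α → ℕ => ∏ i, f i (n i)) =
        (fun x : ℕ × (α → ℕ) => f none x.1 * ∏ a, f (some a) (x.2 a)) ∘ E := by
      funext n
      simp [hEdef, Fintype.prod_option, Equiv.piOptionEquivProd]
    rw [hfun, Fintype.prod_option]
    exact (Equiv.hasSum_iff E).mpr hS


set_option maxHeartbeats 1000000 in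
/-- random-current representation of the partition function:
`2^{-|Λ|} ∑_{φ ∈ {±1}^Λ} exp (p ∑_{{u,v} ⊂ Λ} J_{u,v} φ_u φ_v)`
equals `∑_{n : B_Λ → ℕ} (∏_b (p J_b)^{n_b}/n_b!) 1[∂n = ∅]`,
where `∂n` is the set of sites at which the total incident current is odd. -/
theorem partition_function_random_current
    {Λ : Type} [Fintype Λ] [LinearOrder Λ] (p : ℝ) (hp : 0 ≤ p) (J : Λ → Λ → ℝ) :
    ((2 : ℝ) ^ Fintype.card Λ)⁻¹ *
      ∑ φ : Λ → Bool,
        Real.exp (p * ∑ b : Bonds Λ, J b.1.1 b.1.2 * sp φ b.1.1 * sp φ b.1.2)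
    = ∑' n : Bonds Λ → ℕ,
        (∏ b : Bonds Λ, (p * J b.1.1 b.1.2) ^ (n b) / (Nat.factorial (n b) : ℝ)) *
          (if ∀ v : Λ, Even (∑ b : Bonds Λ, if b.1.1 = v ∨ b.1.2 = v then n b else 0)
            then 1 else 0) := by
  classical
  set N := Fintype.card Λ with hN
  have habs : ∀ x : ℝ, Summable fun n : ℕ => |x ^ n / (Nat.factorial n : ℝ)| := fun x => by
    refine (Real.summable_pow_div_factorial |x|).congr fun n => ?_
    rw [abs_div, abs_pow, Nat.abs_cast]
  have expser : ∀ x : ℝ, (∑' n : ℕ, x ^ n / (Nat.factorial n : ℝ)) = Real.exp x := fun x => by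
    rw [Real.exp_eq_exp_ℝ, NormedSpace.exp_eq_tsum_div]
  -- per-configuration HasSum
  have h1 : ∀ φ : Λ → Bool, HasSum
      (fun n : Bonds Λ → ℕ => ∏ b : Bonds Λ,
        (p * J b.1.1 b.1.2 * sp φ b.1.1 * sp φ b.1.2) ^ n b / (Nat.factorial (n b) : ℝ))
      (Real.exp (p * ∑ b : Bonds Λ, J b.1.1 b.1.2 * sp φ b.1.1 * sp φ b.1.2)) := by
    intro φ
    have key := hasSum_pi_prod (Bonds Λ)
      (fun b k => (p * J b.1.1 b.1.2 * sp φ b.1.1 * sp φ b.1.2) ^ k / (Nat.factorial k : ℝ))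
      (fun b => habs _)
    have hval : (∏ b : Bonds Λ, ∑' k : ℕ,
        (p * J b.1.1 b.1.2 * sp φ b.1.1 * sp φ b.1.2) ^ k / (Nat.factorial k : ℝ))
        = Real.exp (p * ∑ b : Bonds Λ, J b.1.1 b.1.2 * sp φ b.1.1 * sp φ b.1.2) := by
      have hsum : (p * ∑ b : Bonds Λ, J b.1.1 b.1.2 * sp φ b.1.1 * sp φ b.1.2)
          = ∑ b : Bonds Λ, p * J b.1.1 b.1.2 * sp φ b.1.1 * sp φ b.1.2 := by
        rw [Finset.mul_sum]; exact Finset.sum_congr rfl fun b _ => by ring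
      rw [hsum, Real.exp_sum]
      exact Finset.prod_congr rfl fun b _ => expser _
    rwa [hval] at key
  have hSig := hasSum_sum (s := (Finset.univ : Finset (Λ → Bool))) fun φ _ => h1 φ
  have hscaled := hSig.mul_left ((2 : ℝ) ^ N)⁻¹
  -- pointwise identification of the summand
  have hpoint : ∀ n : Bonds Λ → ℕ,
      ((2 : ℝ) ^ N)⁻¹ * ∑ φ : Λ → Bool, ∏ b : Bonds Λ,
        (p * J b.1.1 b.1.2 * sp φ b.1.1 * sp φ b.1.2) ^ n b / (Nat.factorial (n b) : ℝ)
      = (∏ b : Bonds Λ, (p * J b.1.1 b.1.2) ^ (n b) / (Nat.factorial (n b) : ℝ)) *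
          (if ∀ v : Λ, Even (∑ b : Bonds Λ, if b.1.1 = v ∨ b.1.2 = v then n b else 0)
            then 1 else 0) := by
    intro n
    set d : Λ → ℕ := fun v => ∑ b : Bonds Λ, if b.1.1 = v ∨ b.1.2 = v then n b else 0 with hd
    set A : ℝ := ∏ b : Bonds Λ, (p * J b.1.1 b.1.2) ^ (n b) / (Nat.factorial (n b) : ℝ) with hA
    have step1 : ∀ φ : Λ → Bool,
        (∏ b : Bonds Λ,
          (p * J b.1.1 b.1.2 * sp φ b.1.1 * sp φ b.1.2) ^ n b / (Nat.factorial (n b) : ℝ))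
        = A * ∏ v : Λ, sp φ v ^ d v := by
      intro φ
      have e1 : (∏ b : Bonds Λ,
          (p * J b.1.1 b.1.2 * sp φ b.1.1 * sp φ b.1.2) ^ n b / (Nat.factorial (n b) : ℝ))
          = ∏ b : Bonds Λ, ((p * J b.1.1 b.1.2) ^ (n b) / (Nat.factorial (n b) : ℝ) *
              (sp φ b.1.1 ^ n b * sp φ b.1.2 ^ n b)) := by
        refine Finset.prod_congr rfl fun b _ => ?_
        rw [mul_pow, mul_pow]; ring
      rw [e1, Finset.prod_mul_distrib, ← hA]
      congr 1
      -- ∏_b sp_u^{n_b} sp_v^{n_b} = ∏_v sp_v^{d v}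
      have e2 : ∀ b : Bonds Λ, sp φ b.1.1 ^ n b * sp φ b.1.2 ^ n b
          = ∏ v : Λ, sp φ v ^ (if b.1.1 = v ∨ b.1.2 = v then n b else 0) := by
        intro b
        have hne : b.1.1 ≠ b.1.2 := ne_of_lt b.2
        have esplit : ∀ v : Λ, (if b.1.1 = v ∨ b.1.2 = v then n b else 0)
            = (if b.1.1 = v then n b else 0) + (if b.1.2 = v then n b else 0) := by
          intro v
          by_cases h1 : (b : Λ × Λ).1 = v <;> by_cases h2 : (b : Λ × Λ).2 = v
          · exact absurd (h1.trans h2.symm) hne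
          · simp [h1, h2]
          · simp [h1, h2]
          · simp [h1, h2]
        simp_rw [esplit, pow_add, Finset.prod_mul_distrib]
        have eone : ∀ u : Λ, (∏ v : Λ, sp φ v ^ (if u = v then n b else 0)) = sp φ u ^ n b := by
          intro u
          have : ∀ v : Λ, sp φ v ^ (if u = v then n b else 0)
              = (if u = v then sp φ v ^ n b else 1) := by
            intro v; by_cases h : u = v <;> simp [h]
          simp_rw [this]
          simp [Finset.prod_ite_eq]
        rw [eone, eone]
      calc (∏ b : Bonds Λ, sp φ b.1.1 ^ n b * sp φ b.1.2 ^ n b)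
          = ∏ b : Bonds Λ, ∏ v : Λ,
              sp φ v ^ (if b.1.1 = v ∨ b.1.2 = v then n b else 0) :=
            Finset.prod_congr rfl fun b _ => e2 b
        _ = ∏ v : Λ, ∏ b : Bonds Λ,
              sp φ v ^ (if b.1.1 = v ∨ b.1.2 = v then n b else 0) := Finset.prod_comm
        _ = ∏ v : Λ, sp φ v ^ d v := by
            refine Finset.prod_congr rfl fun v _ => ?_
            rw [Finset.prod_pow_eq_pow_sum]
    have step2 : (∑ φ : Λ → Bool, ∏ v : Λ, sp φ v ^ d v)
        = if ∀ v : Λ, Even (d v) then (2 : ℝ) ^ N else 0 := by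
      have e3 : (∑ φ : Λ → Bool, ∏ v : Λ, sp φ v ^ d v)
          = ∏ v : Λ, ∑ s : Bool, (if s then (1 : ℝ) else -1) ^ d v := by
        rw [Fintype.prod_sum]
        rfl
      rw [e3]
      have e4 : ∀ v : Λ, (∑ s : Bool, (if s then (1 : ℝ) else -1) ^ d v)
          = if Even (d v) then 2 else 0 := by
        intro v
        rw [Fintype.sum_bool]
        simp only [if_true, Bool.false_eq_true, if_false, one_pow]
        by_cases h : Even (d v)
        · rw [if_pos h, h.neg_one_pow]; norm_num
        · rw [if_neg h, (Nat.not_even_iff_odd.mp h).neg_one_pow]; norm_num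
      simp_rw [e4]
      by_cases h : ∀ v : Λ, Even (d v)
      · rw [if_pos h]
        rw [Finset.prod_congr rfl fun v _ => if_pos (h v), Finset.prod_const]
        simp [hN]
      · rw [if_neg h]
        push_neg at h
        obtain ⟨v, hv⟩ := h
        exact Finset.prod_eq_zero (Finset.mem_univ v) (by rw [if_neg hv])
    simp_rw [step1, ← Finset.mul_sum, step2]
    by_cases h : ∀ v : Λ, Even (d v)
    · rw [if_pos h, if_pos h, mul_one]
      have h2 : ((2 : ℝ) ^ N) ≠ 0 := by positivity
      rw [mul_comm A, ← mul_assoc, inv_mul_cancel₀ h2, one_mul]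
    · rw [if_neg h, if_neg h, mul_zero, mul_zero]
  have hfin : HasSum
      (fun n : Bonds Λ → ℕ =>
        (∏ b : Bonds Λ, (p * J b.1.1 b.1.2) ^ (n b) / (Nat.factorial (n b) : ℝ)) *
          (if ∀ v : Λ, Even (∑ b : Bonds Λ, if b.1.1 = v ∨ b.1.2 = v then n b else 0)
            then 1 else 0))
      (((2 : ℝ) ^ N)⁻¹ *
        ∑ φ : Λ → Bool,
          Real.exp (p * ∑ b : Bonds Λ, J b.1.1 b.1.2 * sp φ b.1.1 * sp φ b.1.2)) := by
    refine HasSum.congr_fun hscaled ?_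
    intro n
    exact (hpoint n).symm
  exact hfin.tsum_eq.symm
end

section
/- For a finite set Λ, x, y ∈ Λ, and real couplings J, the unnormalized two-point function 2^{-|Λ|} ∑_{φ ∈ {±1}^Λ} φ_x φ_y exp(p ∑_{{u,v}} J_{u,v} φ_u φ_v) equals ∑_{n : B_Λ → ℤ_{≥0}} w(n) · 1[∂n = {x} △ {y}], where w(n) = ∏_b (pJ_b)^{n_b}/n_b! and ∂n is the set of sites at which the total incident current is odd. -/
open scoped BigOperators
set_option maxHeartbeats 1000000

lemma exp_tsum_div (t : ℝ) : Real.exp t = ∑' n : ℕ, t ^ n / (Nat.factorial n : ℝ) := by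
  rw [Real.exp_eq_exp_ℝ, NormedSpace.exp_eq_tsum ℝ]
  exact tsum_congr fun n => by rw [smul_eq_mul, div_eq_inv_mul]

lemma summable_abs_expSeries (t : ℝ) :
    Summable (fun n : ℕ => |t ^ n / (Nat.factorial n : ℝ)|) :=
  (Real.summable_pow_div_factorial |t|).congr fun n => by
    rw [abs_div, abs_pow, Nat.abs_cast]

lemma real_summable_of_abs {ι : Type*} {f : ι → ℝ} (h : Summable fun i => |f i|) :
    Summable f :=
  Summable.of_norm (by simpa [Real.norm_eq_abs] using h)

lemma hasSum_congr_fun {ι α : Type*} [AddCommMonoid α] [TopologicalSpace α]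
    {f g : ι → α} {a : α} (h : HasSum f a) (he : ∀ i, f i = g i) : HasSum g a :=
  (funext he : f = g) ▸ h

/-- Product over `Fin m` of absolutely convergent series equals the sum over
functions of products. -/
lemma pi_prod_hasSum : ∀ (m : ℕ) (f : Fin m → ℕ → ℝ),
    (∀ i, Summable fun k => |f i k|) →
    Summable (fun g : Fin m → ℕ => |∏ i, f i (g i)|) ∧
    HasSum (fun g : Fin m → ℕ => ∏ i, f i (g i)) (∏ i, ∑' k, f i k) := by
  intro m
  induction m with
  | zero =>
    intro f _
    have h1 : HasSum (fun g : Fin 0 → ℕ => ∏ i, f i (g i)) (∏ i : Fin 0, ∑' k, f i k) := by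
      simpa using hasSum_single (f := fun g : Fin 0 → ℕ => ∏ i, f i (g i)) default
        (fun b hb => absurd (Subsingleton.elim b default) hb)
    refine ⟨?_, h1⟩
    exact (hasSum_single (f := fun g : Fin 0 → ℕ => |∏ i, f i (g i)|) default
      (fun b hb => absurd (Subsingleton.elim b default) hb)).summable
  | succ m ih =>
    intro f hf
    obtain ⟨hS0, hH0⟩ := ih (fun i k => f i.succ k) (fun i => hf i.succ)
    have hS : Summable (fun g : Fin m → ℕ => |∏ i, f i.succ (g i)|) := hS0
    have hH : HasSum (fun g : Fin m → ℕ => ∏ i, f i.succ (g i))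
        (∏ i : Fin m, ∑' k, f i.succ k) := hH0
    have h0 : HasSum (fun k => f 0 k) (∑' k, f 0 k) :=
      (real_summable_of_abs (hf 0)).hasSum
    have habs0 := Summable.mul_of_nonneg (hf 0) hS
      (fun k => abs_nonneg _) (fun g => abs_nonneg _)
    have habs' : Summable (fun z : ℕ × (Fin m → ℕ) =>
        |f 0 z.1 * ∏ i, f i.succ (z.2 i)|) :=
      habs0.congr (fun z => (abs_mul _ _).symm)
    have hm0 := h0.mul hH ((real_summable_of_abs habs').congr (fun z => rfl))
    have hm : HasSum (fun z : ℕ × (Fin m → ℕ) => f 0 z.1 * ∏ i, f i.succ (z.2 i))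
        ((∑' k, f 0 k) * ∏ i : Fin m, ∑' k, f i.succ k) :=
      hasSum_congr_fun hm0 (fun z => rfl)
    -- the explicit equivalence
    let e : (Fin (m + 1) → ℕ) ≃ ℕ × (Fin m → ℕ) :=
      { toFun := fun g => (g 0, fun i => g i.succ)
        invFun := fun z => Fin.cons z.1 z.2
        left_inv := fun g => by
          funext i
          refine Fin.cases ?_ ?_ i
          · simp
          · intro j; simp
        right_inv := fun z => by
          refine Prod.ext ?_ ?_
          · simp
          · funext j; simp }
    have hfun : (fun g : Fin (m + 1) → ℕ => ∏ i, f i (g i)) =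
        (fun z : ℕ × (Fin m → ℕ) => f 0 z.1 * ∏ i, f i.succ (z.2 i)) ∘ e := by
      funext g
      exact Fin.prod_univ_succ _
    have htot : (∏ i : Fin (m + 1), ∑' k, f i k) =
        (∑' k, f 0 k) * ∏ i : Fin m, ∑' k, f i.succ k := Fin.prod_univ_succ _
    constructor
    · have : (fun g : Fin (m + 1) → ℕ => |∏ i, f i (g i)|) =
          (fun z : ℕ × (Fin m → ℕ) => |f 0 z.1 * ∏ i, f i.succ (z.2 i)|) ∘ e := by
        funext g
        exact congrArg abs (Fin.prod_univ_succ _)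
      rw [this]
      exact e.summable_iff.2 habs'
    · rw [hfun, htot]
      exact e.hasSum_iff.2 hm

/-- Fintype version. -/
lemma pi_prod_hasSum' {ι : Type} [Fintype ι] (f : ι → ℕ → ℝ)
    (hf : ∀ i, Summable fun k => |f i k|) :
    Summable (fun g : ι → ℕ => |∏ i, f i (g i)|) ∧
    HasSum (fun g : ι → ℕ => ∏ i, f i (g i)) (∏ i, ∑' k, f i k) := by
  classical
  set c := Fintype.card ι
  set e := Fintype.equivFin ι
  obtain ⟨hS0, hH0⟩ := pi_prod_hasSum c (fun j k => f (e.symm j) k) (fun j => hf _)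
  have hS : Summable (fun h : Fin c → ℕ => |∏ j, f (e.symm j) (h j)|) := hS0
  have hH : HasSum (fun h : Fin c → ℕ => ∏ j, f (e.symm j) (h j))
      (∏ j : Fin c, ∑' k, f (e.symm j) k) := hH0
  let E : (ι → ℕ) ≃ (Fin c → ℕ) := Equiv.arrowCongr e (Equiv.refl ℕ)
  have hfun : (fun g : ι → ℕ => ∏ i, f i (g i)) =
      (fun h : Fin c → ℕ => ∏ j, f (e.symm j) (h j)) ∘ E := by
    funext g
    exact (Equiv.prod_comp e.symm (fun i => f i (g i))).symm
  have htot : (∏ i : ι, ∑' k, f i k) = ∏ j : Fin c, ∑' k, f (e.symm j) k :=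
    (Equiv.prod_comp e.symm (fun i => ∑' k, f i k)).symm
  constructor
  · have : (fun g : ι → ℕ => |∏ i, f i (g i)|) =
        (fun h : Fin c → ℕ => |∏ j, f (e.symm j) (h j)|) ∘ E := by
      funext g
      exact congrArg abs ((Equiv.prod_comp e.symm (fun i => f i (g i))).symm)
    rw [this]
    exact E.summable_iff.2 hS
  · rw [hfun, htot]
    exact E.hasSum_iff.2 hH

/-- random-current representation of the unnormalized two-point function:
`2^{-|Λ|} ∑_{φ} φ_x φ_y exp (p ∑_{{u,v}} J_{u,v} φ_u φ_v)
  = ∑_{n : B_Λ → ℕ} w(n) 1[∂n = {x} △ {y}]`,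
where `w(n) = ∏_b (p J_b)^{n_b}/n_b!` and `∂n` is the set of sites with odd total
incident current; `v ∈ {x} △ {y}` iff exactly one of `v = x`, `v = y` holds. -/
theorem two_point_function_random_current
    {Λ : Type} [Fintype Λ] [LinearOrder Λ] (p : ℝ) (hp : 0 ≤ p) (J : Λ → Λ → ℝ)
    (x y : Λ) :
    ((2 : ℝ) ^ Fintype.card Λ)⁻¹ *
      ∑ φ : Λ → Bool, sp φ x * sp φ y *
        Real.exp (p * ∑ b : Bonds Λ, J b.1.1 b.1.2 * sp φ b.1.1 * sp φ b.1.2)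
    = ∑' n : Bonds Λ → ℕ,
        (∏ b : Bonds Λ, (p * J b.1.1 b.1.2) ^ (n b) / (Nat.factorial (n b) : ℝ)) *
          (if ∀ v : Λ,
              (Odd (∑ b : Bonds Λ, if b.1.1 = v ∨ b.1.2 = v then n b else 0) ↔
                Xor (v = x) (v = y))
            then 1 else 0) := by
  classical
  set N := Fintype.card Λ with hN
  -- per-configuration summability and expansion
  have hsummand : ∀ φ : Λ → Bool,
      Summable (fun n : Bonds Λ → ℕ =>
        |∏ b : Bonds Λ,
          (p * J b.1.1 b.1.2 * sp φ b.1.1 * sp φ b.1.2) ^ n b / (Nat.factorial (n b) : ℝ)|) ∧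
      HasSum (fun n : Bonds Λ → ℕ =>
          ∏ b : Bonds Λ,
            (p * J b.1.1 b.1.2 * sp φ b.1.1 * sp φ b.1.2) ^ n b / (Nat.factorial (n b) : ℝ))
        (∏ b : Bonds Λ, ∑' k : ℕ,
          (p * J b.1.1 b.1.2 * sp φ b.1.1 * sp φ b.1.2) ^ k / (Nat.factorial k : ℝ)) := by
    intro φ
    obtain ⟨h1, h2⟩ := pi_prod_hasSum' (fun (b : Bonds Λ) (k : ℕ) =>
        (p * J b.1.1 b.1.2 * sp φ b.1.1 * sp φ b.1.2) ^ k / (Nat.factorial k : ℝ))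
      (fun b => summable_abs_expSeries _)
    exact ⟨h1, h2⟩
  have hexp : ∀ φ : Λ → Bool,
      Real.exp (p * ∑ b : Bonds Λ, J b.1.1 b.1.2 * sp φ b.1.1 * sp φ b.1.2)
        = ∏ b : Bonds Λ, ∑' k : ℕ,
            (p * J b.1.1 b.1.2 * sp φ b.1.1 * sp φ b.1.2) ^ k / (Nat.factorial k : ℝ) := by
    intro φ
    rw [Finset.mul_sum, Real.exp_sum]
    refine Finset.prod_congr rfl fun b _ => ?_
    rw [show p * (J b.1.1 b.1.2 * sp φ b.1.1 * sp φ b.1.2)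
        = p * J b.1.1 b.1.2 * sp φ b.1.1 * sp φ b.1.2 by ring, exp_tsum_div]
  have hA : ∀ φ : Λ → Bool,
      sp φ x * sp φ y *
        Real.exp (p * ∑ b : Bonds Λ, J b.1.1 b.1.2 * sp φ b.1.1 * sp φ b.1.2)
      = ∑' n : Bonds Λ → ℕ, sp φ x * sp φ y *
          ∏ b : Bonds Λ,
            (p * J b.1.1 b.1.2 * sp φ b.1.1 * sp φ b.1.2) ^ n b / (Nat.factorial (n b) : ℝ) := by
    intro φ
    rw [tsum_mul_left, hexp φ]
    exact congrArg _ (hsummand φ).2.tsum_eq.symm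
  -- swap the finite sum with the tsum
  have hswap :
      (∑ φ : Λ → Bool, ∑' n : Bonds Λ → ℕ, sp φ x * sp φ y *
          ∏ b : Bonds Λ,
            (p * J b.1.1 b.1.2 * sp φ b.1.1 * sp φ b.1.2) ^ n b / (Nat.factorial (n b) : ℝ))
      = ∑' n : Bonds Λ → ℕ, ∑ φ : Λ → Bool, sp φ x * sp φ y *
          ∏ b : Bonds Λ,
            (p * J b.1.1 b.1.2 * sp φ b.1.1 * sp φ b.1.2) ^ n b / (Nat.factorial (n b) : ℝ) := by
    refine (Summable.tsum_finsetSum fun φ _ => ?_).symm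
    exact ((real_summable_of_abs (hsummand φ).1).mul_left
      (sp φ x * sp φ y)).congr fun n => rfl
  -- split the weight from the spins
  have hsplit : ∀ (φ : Λ → Bool) (n : Bonds Λ → ℕ),
      (∏ b : Bonds Λ,
        (p * J b.1.1 b.1.2 * sp φ b.1.1 * sp φ b.1.2) ^ n b / (Nat.factorial (n b) : ℝ))
      = (∏ b : Bonds Λ, (p * J b.1.1 b.1.2) ^ n b / (Nat.factorial (n b) : ℝ)) *
        ∏ b : Bonds Λ, sp φ b.1.1 ^ n b * sp φ b.1.2 ^ n b := by
    intro φ n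
    rw [← Finset.prod_mul_distrib]
    exact Finset.prod_congr rfl fun b _ => by rw [mul_pow, mul_pow]; ring
  -- the parity condition pointwise
  have key : ∀ (n : Bonds Λ → ℕ) (v : Λ),
      Even ((if v = x then 1 else 0) + (if v = y then 1 else 0) +
          ∑ b : Bonds Λ, if b.1.1 = v ∨ b.1.2 = v then n b else 0)
        ↔ (Odd (∑ b : Bonds Λ, if b.1.1 = v ∨ b.1.2 = v then n b else 0)
            ↔ Xor (v = x) (v = y)) := by
    intro n v
    set s := ∑ b : Bonds Λ, if b.1.1 = v ∨ b.1.2 = v then n b else 0 with hs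
    have hXor : Xor (v = x) (v = y) ↔
        ¬ Even ((if v = x then 1 else 0) + (if v = y then 1 else 0) : ℕ) := by
      by_cases h1 : v = x <;> by_cases h2 : v = y
      · rw [if_pos h1, if_pos h2]
        exact iff_of_false (by rintro (⟨-, hb⟩ | ⟨-, ha⟩); exacts [hb h2, ha h1])
          (by decide)
      · rw [if_pos h1, if_neg h2]
        exact iff_of_true (Or.inl ⟨h1, h2⟩) (by decide)
      · rw [if_neg h1, if_pos h2]
        exact iff_of_true (Or.inr ⟨h2, h1⟩) (by decide)
      · rw [if_neg h1, if_neg h2]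
        exact iff_of_false (by rintro (⟨ha, -⟩ | ⟨hb, -⟩); exacts [h1 ha, h2 hb])
          (by decide)
    rw [Nat.even_add, hXor, ← Nat.not_even_iff_odd]
    tauto
  -- the spin sum
  have hspin : ∀ n : Bonds Λ → ℕ,
      (∑ φ : Λ → Bool, sp φ x * sp φ y *
          ∏ b : Bonds Λ, sp φ b.1.1 ^ n b * sp φ b.1.2 ^ n b)
      = if (∀ v : Λ,
            Odd (∑ b : Bonds Λ, if b.1.1 = v ∨ b.1.2 = v then n b else 0) ↔
              Xor (v = x) (v = y))
        then (2 : ℝ) ^ N else 0 := by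
    intro n
    set d : Λ → ℕ := fun v => (if v = x then 1 else 0) + (if v = y then 1 else 0) +
        ∑ b : Bonds Λ, if b.1.1 = v ∨ b.1.2 = v then n b else 0 with hd
    -- Claim A
    have claimA : ∀ φ : Λ → Bool,
        (∏ v : Λ, sp φ v ^ d v)
          = sp φ x * sp φ y * ∏ b : Bonds Λ, sp φ b.1.1 ^ n b * sp φ b.1.2 ^ n b := by
      intro φ
      have h1 : ∀ v : Λ, sp φ v ^ d v =
          (if v = x then sp φ v else 1) * (if v = y then sp φ v else 1) *
            ∏ b : Bonds Λ, sp φ v ^ (if b.1.1 = v ∨ b.1.2 = v then n b else 0) := by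
        intro v
        rw [hd]
        rw [pow_add, pow_add, ← Finset.prod_pow_eq_pow_sum]
        congr 1
        congr 1
        · split <;> simp
        · split <;> simp
      have h2 : (∏ v : Λ, if v = x then sp φ v else 1) = sp φ x := by
        rw [Finset.prod_ite_eq' Finset.univ x (fun v => sp φ v)]
        simp
      have h3 : (∏ v : Λ, if v = y then sp φ v else 1) = sp φ y := by
        rw [Finset.prod_ite_eq' Finset.univ y (fun v => sp φ v)]
        simp
      have h4 : (∏ v : Λ, ∏ b : Bonds Λ, sp φ v ^ (if b.1.1 = v ∨ b.1.2 = v then n b else 0))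
          = ∏ b : Bonds Λ, sp φ b.1.1 ^ n b * sp φ b.1.2 ^ n b := by
        rw [Finset.prod_comm]
        refine Finset.prod_congr rfl fun b _ => ?_
        have hne : b.1.1 ≠ b.1.2 := ne_of_lt b.2
        have hsplitexp : ∀ v : Λ, (if b.1.1 = v ∨ b.1.2 = v then n b else 0)
            = (if b.1.1 = v then n b else 0) + (if b.1.2 = v then n b else 0) := by
          intro v
          by_cases hv1 : b.1.1 = v <;> by_cases hv2 : b.1.2 = v <;>
            simp [hv1, hv2]
          exact absurd (hv1.trans hv2.symm) hne
        calc (∏ v : Λ, sp φ v ^ (if b.1.1 = v ∨ b.1.2 = v then n b else 0))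
            = ∏ v : Λ, (if b.1.1 = v then sp φ v ^ n b else 1) *
                (if b.1.2 = v then sp φ v ^ n b else 1) := by
              refine Finset.prod_congr rfl fun v _ => ?_
              rw [hsplitexp v, pow_add]
              congr 1 <;> (split <;> simp)
          _ = sp φ b.1.1 ^ n b * sp φ b.1.2 ^ n b := by
              rw [Finset.prod_mul_distrib,
                Finset.prod_ite_eq Finset.univ b.1.1 (fun v => sp φ v ^ n b),
                Finset.prod_ite_eq Finset.univ b.1.2 (fun v => sp φ v ^ n b)]
              simp
      rw [Finset.prod_congr rfl fun v _ => h1 v, Finset.prod_mul_distrib,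
        Finset.prod_mul_distrib, h2, h3, h4]
    rw [Finset.sum_congr rfl fun φ _ => (claimA φ).symm]
    -- Claim B : sum over configurations factorizes
    have claimB : (∑ φ : Λ → Bool, ∏ v : Λ, sp φ v ^ d v)
        = ∏ v : Λ, ∑ s : Bool, (if s then (1 : ℝ) else -1) ^ d v := by
      rw [Fintype.prod_sum (fun v (s : Bool) => (if s then (1 : ℝ) else -1) ^ d v)]
      exact Finset.sum_congr rfl fun φ _ => Finset.prod_congr rfl fun v _ => rfl
    rw [claimB]
    have hval : ∀ v : Λ, (∑ s : Bool, (if s then (1 : ℝ) else -1) ^ d v)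
        = if Even (d v) then 2 else 0 := by
      intro v
      rw [Fintype.sum_bool]
      by_cases h : Even (d v)
      · rw [if_pos h]; norm_num [h.neg_one_pow]
      · rw [if_neg h]; norm_num [(Nat.not_even_iff_odd.1 h).neg_one_pow]
    rw [Finset.prod_congr rfl fun v _ => hval v]
    by_cases hc : ∀ v : Λ, Even (d v)
    · rw [Finset.prod_congr rfl fun v _ => if_pos (hc v), Finset.prod_const,
        Finset.card_univ]
      rw [if_pos]
      intro v
      exact (key n v).1 (hc v)
    · push_neg at hc
      obtain ⟨v, hv⟩ := hc
      rw [if_neg (fun hcond => hv ((key n v).2 (hcond v)))]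
      exact Finset.prod_eq_zero (f := fun v => if Even (d v) then (2 : ℝ) else 0)
        (Finset.mem_univ v) (if_neg hv)
  -- assemble
  rw [Finset.sum_congr rfl fun φ _ => hA φ, hswap, ← tsum_mul_left]
  refine tsum_congr fun n => ?_
  have hSn : (∑ φ : Λ → Bool, sp φ x * sp φ y *
        ∏ b : Bonds Λ,
          (p * J b.1.1 b.1.2 * sp φ b.1.1 * sp φ b.1.2) ^ n b / (Nat.factorial (n b) : ℝ))
      = (∏ b : Bonds Λ, (p * J b.1.1 b.1.2) ^ n b / (Nat.factorial (n b) : ℝ)) *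
        ∑ φ : Λ → Bool, sp φ x * sp φ y *
          ∏ b : Bonds Λ, sp φ b.1.1 ^ n b * sp φ b.1.2 ^ n b := by
    rw [Finset.mul_sum]
    exact Finset.sum_congr rfl fun φ _ => by rw [hsplit φ n]; ring
  rw [hSn, hspin n]
  have h2N : ((2 : ℝ) ^ N) ≠ 0 := by positivity
  split
  · rw [mul_one]
    field_simp
  · simp
end

section
/- Source-switching lemma: Let N : B_Λ → ℤ_{≥0} be a current configuration, let A ⊂ Λ, and let v ≠ x ∈ Λ. Then ∑_{m : ∂m = {v,x}, m ≡ 0 on B_Λ \ B_{A^c}} ∏_{b ∈ B_{A^c}} C(N_b, m_b) = 1[v is connected to x in A^c on the graph of N] · ∑_{m : ∂m = ∅, m ≡ 0 on B_Λ \ B_{A^c}} ∏_{b ∈ B_{A^c}} C(N_b, m_b), where C(n,k) is the binomial coefficient. -/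
open scoped BigOperators Classical

/-- The total current incident to the site `v`. -/
def deg {Λ : Type} [Fintype Λ] [LinearOrder Λ] (n : Bonds Λ → ℕ) (v : Λ) : ℕ :=
  ∑ b : Bonds Λ, if b.1.1 = v ∨ b.1.2 = v then n b else 0

section Aux
variable {Λ : Type} [Fintype Λ] [LinearOrder Λ]

private lemma degZ (m : Bonds Λ → ℕ) (u : Λ) :
    ((deg m u : ℕ) : ZMod 2)
      = ∑ b : Bonds Λ, if b.1.1 = u ∨ b.1.2 = u then ((m b : ZMod 2)) else 0 := by
  simp [deg, Nat.cast_sum, apply_ite (Nat.cast : ℕ → ZMod 2)]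

private lemma sum_symmDiff_singleton {α : Type*} [DecidableEq α] (s : Finset α) (a : α)
    (g : α → ZMod 2) :
    ∑ b ∈ symmDiff s {a}, g b = (∑ b ∈ s, g b) + g a := by
  by_cases h : a ∈ s
  · have hs : symmDiff s {a} = s.erase a := by
      ext y
      simp only [Finset.mem_symmDiff, Finset.mem_erase, Finset.mem_singleton]
      constructor
      · rintro (⟨hy, hne⟩ | ⟨rfl, hy⟩) <;> tauto
      · rintro ⟨hne, hy⟩; tauto
    rw [hs, Finset.sum_erase_eq_sub h, sub_eq_add_neg, CharTwo.neg_eq]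
  · have hs : symmDiff s {a} = insert a s := by
      ext y
      simp only [Finset.mem_symmDiff, Finset.mem_insert, Finset.mem_singleton]
      constructor
      · rintro (⟨hy, hne⟩ | ⟨rfl, hy⟩) <;> tauto
      · rintro (rfl | hy)
        · exact Or.inr ⟨rfl, h⟩
        · exact Or.inl ⟨hy, fun e => h (e ▸ hy)⟩
    rw [hs, Finset.sum_insert h, add_comm]

private lemma card_symmDiff_singleton {α : Type*} [DecidableEq α] (s : Finset α) (a : α) :
    ((symmDiff s {a}).card : ZMod 2) = (s.card : ZMod 2) + 1 := by
  by_cases h : a ∈ s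
  · have hs : symmDiff s {a} = s.erase a := by
      ext y
      simp only [Finset.mem_symmDiff, Finset.mem_erase, Finset.mem_singleton]
      constructor
      · rintro (⟨hy, hne⟩ | ⟨rfl, hy⟩) <;> tauto
      · rintro ⟨hne, hy⟩; tauto
    rw [hs, Finset.card_erase_of_mem h,
      Nat.cast_sub (Nat.one_le_iff_ne_zero.2 (Finset.card_ne_zero_of_mem h))]
    push_cast
    rw [sub_eq_add_neg, (show (-1 : ZMod 2) = 1 by decide)]
  · have hs : symmDiff s {a} = insert a s := by
      ext y
      simp only [Finset.mem_symmDiff, Finset.mem_insert, Finset.mem_singleton]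
      constructor
      · rintro (⟨hy, hne⟩ | ⟨rfl, hy⟩) <;> tauto
      · rintro (rfl | hy)
        · exact Or.inr ⟨rfl, h⟩
        · exact Or.inl ⟨hy, fun e => h (e ▸ hy)⟩
    rw [hs, Finset.card_insert_of_notMem h]
    push_cast; ring

private lemma exists_toggle (N : Bonds Λ → ℕ) (A : Finset Λ) {v x : Λ}
    (h : Relation.ReflTransGen
      (fun u w => u ∉ A ∧ w ∉ A ∧ ∃ b : Bonds Λ, 0 < N b ∧
        ((b.1.1 = u ∧ b.1.2 = w) ∨ (b.1.1 = w ∧ b.1.2 = u))) v x) :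
    ∃ t : Finset (Bonds Λ), (∀ b ∈ t, 0 < N b ∧ b.1.1 ∉ A ∧ b.1.2 ∉ A) ∧
      ∀ u : Λ, (∑ b ∈ t, (if b.1.1 = u ∨ b.1.2 = u then (1 : ZMod 2) else 0))
        = if Xor' (u = v) (u = x) then 1 else 0 := by
  induction h with
  | refl =>
      refine ⟨∅, by simp, fun u => ?_⟩
      simp [Xor']
  | @tail w c hvw step ih =>
      obtain ⟨t, ht, hpar⟩ := ih
      obtain ⟨hwA, hcA, b0, hb0, hends⟩ := step
      have hwc : w ≠ c := by
        rcases hends with ⟨h1, h2⟩ | ⟨h1, h2⟩ <;>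
          · intro hh; exact absurd (b0.2) (by rw [h1, h2, hh]; exact lt_irrefl _)
      have hb0good : 0 < N b0 ∧ b0.1.1 ∉ A ∧ b0.1.2 ∉ A := by
        rcases hends with ⟨h1, h2⟩ | ⟨h1, h2⟩ <;> exact ⟨hb0, by rw [h1, h2]; tauto⟩
      refine ⟨symmDiff t {b0}, ?_, fun u => ?_⟩
      · intro b hb
        rw [Finset.mem_symmDiff] at hb
        rcases hb with ⟨hb, _⟩ | ⟨hb, _⟩
        · exact ht b hb
        · rw [Finset.mem_singleton] at hb; subst hb; exact hb0good
      · rw [sum_symmDiff_singleton, hpar u]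
        have hinc : (if b0.1.1 = u ∨ b0.1.2 = u then (1 : ZMod 2) else 0)
            = if u = w ∨ u = c then 1 else 0 := by
          rcases hends with ⟨h1, h2⟩ | ⟨h1, h2⟩ <;> rw [h1, h2] <;>
            exact if_congr (by tauto) rfl rfl
        rw [hinc]
        by_cases h1 : u = v <;> by_cases h2 : u = w <;> by_cases h3 : u = c <;>
          simp_all [Xor'] <;> decide
private lemma tsum_eq_card (N : Bonds Λ → ℕ) (A : Finset Λ)
    (cond : (Bonds Λ → ℕ) → Prop)
    (hsupp : ∀ m, cond m → ∀ b : Bonds Λ, ¬ (b.1.1 ∉ A ∧ b.1.2 ∉ A) → m b = 0) :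
    (∑' m : Bonds Λ → ℕ,
        if cond m then
          ∏ b ∈ Finset.univ.filter (fun b : Bonds Λ => b.1.1 ∉ A ∧ b.1.2 ∉ A),
            (Nat.choose (N b) (m b) : ℝ)
        else 0)
    = ((Finset.univ.filter (fun f : ∀ b : Bonds Λ, Finset (Fin (N b)) =>
          cond (fun b => (f b).card))).card : ℝ) := by
  classical
  set F := Finset.univ.filter (fun b : Bonds Λ => b.1.1 ∉ A ∧ b.1.2 ∉ A) with hF
  set s : Finset (Bonds Λ → ℕ) := Fintype.piFinset (fun b => Finset.range (N b + 1)) with hs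
  have h0 : ∀ m ∉ s,
      (if cond m then ∏ b ∈ F, (Nat.choose (N b) (m b) : ℝ) else 0) = 0 := by
    intro m hm
    by_cases hc : cond m
    · rw [if_pos hc]
      simp only [hs, Fintype.mem_piFinset, Finset.mem_range, not_forall, not_lt] at hm
      obtain ⟨b, hb⟩ := hm
      have hbF : b ∈ F := by
        rw [hF, Finset.mem_filter]
        refine ⟨Finset.mem_univ _, ?_⟩
        by_contra h
        have := hsupp m hc b h
        omega
      refine Finset.prod_eq_zero hbF ?_
      rw [Nat.choose_eq_zero_of_lt (by omega)]
      norm_cast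
    · rw [if_neg hc]
  rw [tsum_eq_sum h0]
  -- fiberwise decomposition of the RHS card
  have hmem : ∀ f : ∀ b : Bonds Λ, Finset (Fin (N b)), (fun b => (f b).card) ∈ s := by
    intro f
    simp only [hs, Fintype.mem_piFinset, Finset.mem_range]
    intro b
    have := Finset.card_le_univ (f b)
    simpa [Finset.card_fin] using Nat.lt_succ_of_le this
  have hcard := Finset.card_eq_sum_card_fiberwise
    (f := fun f : ∀ b : Bonds Λ, Finset (Fin (N b)) => (fun b => (f b).card))
    (s := Finset.univ.filter (fun f : ∀ b : Bonds Λ, Finset (Fin (N b)) =>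
      cond (fun b => (f b).card))) (t := s)
    (fun f _ => hmem f)
  rw [hcard]
  push_cast
  refine Finset.sum_congr rfl (fun m hm => ?_)
  by_cases hc : cond m
  · rw [if_pos hc]
    have hfiber : ((Finset.univ.filter (fun f : ∀ b : Bonds Λ, Finset (Fin (N b)) =>
          cond (fun b => (f b).card))).filter
            (fun f => (fun b => (f b).card) = m))
        = Fintype.piFinset (fun b => Finset.univ.powersetCard (m b)) := by
      ext f
      simp only [Finset.mem_filter, Finset.mem_univ, true_and,
        Fintype.mem_piFinset, Finset.mem_powersetCard]
      constructor
      · rintro ⟨-, hfm⟩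
        intro b
        exact ⟨Finset.subset_univ _, congrFun hfm b⟩
      · intro h
        have hfm : (fun b => (f b).card) = m := funext fun b => (h b).2
        exact ⟨hfm ▸ hc, hfm⟩
    rw [hfiber, Fintype.card_piFinset]
    have : ∀ b : Bonds Λ, ((Finset.univ : Finset (Fin (N b))).powersetCard (m b)).card
        = Nat.choose (N b) (m b) := by
      intro b
      rw [Finset.card_powersetCard, Finset.card_fin]
    push_cast [this]
    -- extend product from F to univ
    rw [← Finset.prod_subset (Finset.subset_univ F)]
    intro b _ hb
    have : m b = 0 := by
      refine hsupp m hc b ?_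
      intro hgood
      exact hb (by rw [hF]; exact Finset.mem_filter.2 ⟨Finset.mem_univ _, hgood⟩)
    rw [this, Nat.choose_zero_right, Nat.cast_one]
  · rw [if_neg hc]
    have : ((Finset.univ.filter (fun f : ∀ b : Bonds Λ, Finset (Fin (N b)) =>
          cond (fun b => (f b).card))).filter
            (fun f => (fun b => (f b).card) = m)) = ∅ := by
      rw [Finset.filter_eq_empty_iff]
      rintro f hf rfl
      exact hc (Finset.mem_filter.1 hf).2
    rw [this]
    simp
private lemma no_odd_config (N : Bonds Λ → ℕ) (A : Finset Λ) {v x : Λ} (hvx : v ≠ x)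
    (hconn : ¬ Relation.ReflTransGen
      (fun u w => u ∉ A ∧ w ∉ A ∧ ∃ b : Bonds Λ, 0 < N b ∧
        ((b.1.1 = u ∧ b.1.2 = w) ∨ (b.1.1 = w ∧ b.1.2 = u))) v x)
    (f : ∀ b : Bonds Λ, Finset (Fin (N b)))
    (hdeg : ∀ u : Λ, Odd (deg (fun b => (f b).card) u) ↔ Xor' (u = v) (u = x))
    (hsupp : ∀ b : Bonds Λ, ¬ (b.1.1 ∉ A ∧ b.1.2 ∉ A) → (f b).card = 0) : False := by
  classical
  set R := (fun u w => u ∉ A ∧ w ∉ A ∧ ∃ b : Bonds Λ, 0 < N b ∧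
    ((b.1.1 = u ∧ b.1.2 = w) ∨ (b.1.1 = w ∧ b.1.2 = u))) with hR
  set m := (fun b => (f b).card) with hm
  set C : Finset Λ := Finset.univ.filter (fun u => Relation.ReflTransGen R v u) with hC
  have hvC : v ∈ C := Finset.mem_filter.2 ⟨Finset.mem_univ _, Relation.ReflTransGen.refl⟩
  have hxC : x ∉ C := fun h => hconn (Finset.mem_filter.1 h).2
  have hclosed : ∀ u w, u ∈ C → R u w → w ∈ C := by
    intro u w hu hR'
    exact Finset.mem_filter.2 ⟨Finset.mem_univ _,
      Relation.ReflTransGen.tail (Finset.mem_filter.1 hu).2 hR'⟩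
  -- the sum of degrees over C, mod 2
  have hS1 : (∑ u ∈ C, ((deg m u : ℕ) : ZMod 2)) = 1 := by
    have : ∀ u ∈ C, ((deg m u : ℕ) : ZMod 2) = if u = v then 1 else 0 := by
      intro u hu
      have hux : u ≠ x := fun h => hxC (h ▸ hu)
      by_cases huv : u = v
      · rw [if_pos huv, ZMod.natCast_eq_one_iff_odd, hdeg u]
        exact Or.inl ⟨huv, fun h => hvx (huv ▸ h ▸ rfl)⟩
      · rw [if_neg huv, ZMod.natCast_eq_zero_iff_even]
        rw [← Nat.not_odd_iff_even, hdeg u]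
        rintro (⟨h1, -⟩ | ⟨h1, -⟩) <;> [exact huv h1; exact hux h1]
    rw [Finset.sum_congr rfl this, Finset.sum_ite_eq' C v (fun _ => (1 : ZMod 2)),
      if_pos hvC]
  have hS0 : (∑ u ∈ C, ((deg m u : ℕ) : ZMod 2)) = 0 := by
    have hrw : ∀ u, ((deg m u : ℕ) : ZMod 2)
        = ∑ b : Bonds Λ, if b.1.1 = u ∨ b.1.2 = u then ((m b : ZMod 2)) else 0 :=
      degZ m
    rw [Finset.sum_congr rfl (fun u _ => hrw u), Finset.sum_comm]
    refine Finset.sum_eq_zero (fun b _ => ?_)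
    have hne : b.1.1 ≠ b.1.2 := ne_of_lt b.2
    have hsplit : (∑ u ∈ C, if b.1.1 = u ∨ b.1.2 = u then ((m b : ZMod 2)) else 0)
        = (if b.1.1 ∈ C then ((m b : ZMod 2)) else 0)
          + (if b.1.2 ∈ C then ((m b : ZMod 2)) else 0) := by
      have : ∀ u ∈ C, (if b.1.1 = u ∨ b.1.2 = u then ((m b : ZMod 2)) else 0)
          = (if u = b.1.1 then ((m b : ZMod 2)) else 0)
            + (if u = b.1.2 then ((m b : ZMod 2)) else 0) := by
        intro u _
        by_cases h1 : b.1.1 = u <;> by_cases h2 : b.1.2 = u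
        · exact absurd (h1.trans h2.symm) hne
        · rw [if_pos (Or.inl h1), if_pos h1.symm, if_neg (fun h => h2 h.symm), add_zero]
        · rw [if_pos (Or.inr h2), if_neg (fun h => h1 h.symm), if_pos h2.symm, zero_add]
        · rw [if_neg (by tauto), if_neg (fun h => h1 h.symm), if_neg (fun h => h2 h.symm),
            add_zero]
      rw [Finset.sum_congr rfl this, Finset.sum_add_distrib,
        Finset.sum_ite_eq' C b.1.1 (fun _ => (m b : ZMod 2)),
        Finset.sum_ite_eq' C b.1.2 (fun _ => (m b : ZMod 2))]
    rw [hsplit]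
    by_cases hmb : m b = 0
    · rw [hmb]; simp
    · have hgood : b.1.1 ∉ A ∧ b.1.2 ∉ A := by
        by_contra h; exact hmb (hsupp b h)
      have hNb : 0 < N b := by
        have h1 : m b ≤ N b := by
          have := Finset.card_le_univ (f b)
          simpa [hm, Finset.card_fin] using this
        omega
      have hiff : b.1.1 ∈ C ↔ b.1.2 ∈ C := by
        constructor
        · intro h; exact hclosed _ _ h ⟨hgood.1, hgood.2, b, hNb, Or.inl ⟨rfl, rfl⟩⟩
        · intro h; exact hclosed _ _ h ⟨hgood.2, hgood.1, b, hNb, Or.inr ⟨rfl, rfl⟩⟩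
      by_cases h1 : b.1.1 ∈ C
      · rw [if_pos h1, if_pos (hiff.1 h1)]
        exact CharTwo.add_self_eq_zero _
      · rw [if_neg h1, if_neg (fun h => h1 (hiff.2 h)), add_zero]
  rw [hS1] at hS0
  exact one_ne_zero hS0
private lemma card_odd_eq_card_even (N : Bonds Λ → ℕ) (A : Finset Λ) {v x : Λ} (hvx : v ≠ x)
    (hconn : Relation.ReflTransGen
      (fun u w => u ∉ A ∧ w ∉ A ∧ ∃ b : Bonds Λ, 0 < N b ∧
        ((b.1.1 = u ∧ b.1.2 = w) ∨ (b.1.1 = w ∧ b.1.2 = u))) v x) :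
    (Finset.univ.filter (fun f : ∀ b : Bonds Λ, Finset (Fin (N b)) =>
        (∀ u : Λ, Odd (deg (fun b => (f b).card) u) ↔ Xor' (u = v) (u = x)) ∧
        (∀ b : Bonds Λ, ¬ (b.1.1 ∉ A ∧ b.1.2 ∉ A) → (f b).card = 0))).card
    = (Finset.univ.filter (fun f : ∀ b : Bonds Λ, Finset (Fin (N b)) =>
        (∀ u : Λ, Even (deg (fun b => (f b).card) u)) ∧
        (∀ b : Bonds Λ, ¬ (b.1.1 ∉ A ∧ b.1.2 ∉ A) → (f b).card = 0))).card := by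
  classical
  obtain ⟨t, ht, hpar⟩ := exists_toggle N A hconn
  set Φ : (∀ b : Bonds Λ, Finset (Fin (N b))) → (∀ b : Bonds Λ, Finset (Fin (N b))) :=
    fun f b => if h : b ∈ t then symmDiff (f b) {(⟨0, (ht b h).1⟩ : Fin (N b))} else f b
    with hΦ
  have hinv : ∀ f, Φ (Φ f) = f := by
    intro f
    funext b
    by_cases h : b ∈ t
    · simp only [hΦ, dif_pos h, symmDiff_symmDiff_cancel_right]
    · simp only [hΦ, dif_neg h]
  have hcardb : ∀ (f : ∀ b : Bonds Λ, Finset (Fin (N b))) (b : Bonds Λ),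
      (((Φ f) b).card : ZMod 2)
        = ((f b).card : ZMod 2) + (if b ∈ t then 1 else 0) := by
    intro f b
    by_cases h : b ∈ t
    · rw [if_pos h]
      simp only [hΦ, dif_pos h]
      exact card_symmDiff_singleton _ _
    · rw [if_neg h, add_zero]
      simp only [hΦ, dif_neg h]
  have hdegΦ : ∀ (f : ∀ b : Bonds Λ, Finset (Fin (N b))) (u : Λ),
      ((deg (fun b => ((Φ f) b).card) u : ℕ) : ZMod 2)
        = ((deg (fun b => (f b).card) u : ℕ) : ZMod 2)
          + (if Xor' (u = v) (u = x) then 1 else 0) := by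
    intro f u
    rw [degZ, degZ, ← hpar u]
    have : ∀ b : Bonds Λ,
        (if b.1.1 = u ∨ b.1.2 = u then (((Φ f) b).card : ZMod 2) else 0)
          = (if b.1.1 = u ∨ b.1.2 = u then ((f b).card : ZMod 2) else 0)
            + (if b ∈ t then (if b.1.1 = u ∨ b.1.2 = u then (1 : ZMod 2) else 0) else 0) := by
      intro b
      by_cases hb : b.1.1 = u ∨ b.1.2 = u
      · rw [if_pos hb, if_pos hb, hcardb f b]
        by_cases h : b ∈ t
        · rw [if_pos h, if_pos h, if_pos hb]
        · rw [if_neg h, if_neg h]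
      · rw [if_neg hb, if_neg hb, zero_add]
        by_cases h : b ∈ t
        · rw [if_pos h, if_neg hb]
        · rw [if_neg h]
    rw [Finset.sum_congr rfl (fun b _ => this b), Finset.sum_add_distrib]
    congr 1
    rw [Finset.sum_ite_mem, Finset.univ_inter]
  have hsuppΦ : ∀ (f : ∀ b : Bonds Λ, Finset (Fin (N b))) (b : Bonds Λ),
      ¬ (b.1.1 ∉ A ∧ b.1.2 ∉ A) → (Φ f) b = f b := by
    intro f b hb
    have hbt : b ∉ t := fun h => hb (ht b h).2
    simp only [hΦ, dif_neg hbt]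
  refine Finset.card_nbij' Φ Φ ?_ ?_ ?_ ?_
  · rintro f hf
    obtain ⟨-, hdeg, hsupp⟩ := Finset.mem_filter.1 hf
    refine Finset.mem_filter.2 ⟨Finset.mem_univ _, fun u => ?_, fun b hb => ?_⟩
    · rw [← ZMod.natCast_eq_zero_iff_even, hdegΦ f u]
      by_cases hx : Xor' (u = v) (u = x)
      · rw [if_pos hx, (ZMod.natCast_eq_one_iff_odd).2 ((hdeg u).2 hx)]
        decide
      · rw [if_neg hx, add_zero, ZMod.natCast_eq_zero_iff_even, ← Nat.not_odd_iff_even]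
        exact fun h => hx ((hdeg u).1 h)
    · rw [hsuppΦ f b hb]; exact hsupp b hb
  · rintro f hf
    obtain ⟨-, hdeg, hsupp⟩ := Finset.mem_filter.1 hf
    refine Finset.mem_filter.2 ⟨Finset.mem_univ _, fun u => ?_, fun b hb => ?_⟩
    · rw [← ZMod.natCast_eq_one_iff_odd, hdegΦ f u,
        (ZMod.natCast_eq_zero_iff_even).2 (hdeg u), zero_add]
      by_cases hx : Xor' (u = v) (u = x)
      · rw [if_pos hx]
        simp [hx]
      · rw [if_neg hx]
        simp [hx]
    · rw [hsuppΦ f b hb]; exact hsupp b hb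
  · exact fun f _ => hinv f
  · exact fun f _ => hinv f
end Aux

private lemma ite_irrel {α : Sort*} (p : Prop) (i1 i2 : Decidable p) (a b : α) :
    @ite α p i1 a b = @ite α p i2 a b := by
  cases Subsingleton.elim i1 i2; rfl

/-- source-switching lemma: for a current configuration `N` on `B_Λ`,
`A ⊂ Λ`, `v ≠ x`,
`∑_{m : ∂m = {v,x}, m ≡ 0 off B_{A^c}} ∏_{b ∈ B_{A^c}} C(N_b, m_b)
 = 1[v ⟷ x in A^c on G_N] ∑_{m : ∂m = ∅, m ≡ 0 off B_{A^c}} ∏_{b ∈ B_{A^c}} C(N_b, m_b)`,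
where `B_{A^c}` is the set of bonds with both endpoints outside `A`, and `v ⟷ x in A^c`
means there is a path from `v` to `x` of bonds `b` with both endpoints outside `A`
and `N_b > 0`. -/
theorem source_switching_lemma
    {Λ : Type} [Fintype Λ] [LinearOrder Λ]
    (N : Bonds Λ → ℕ) (A : Finset Λ) (v x : Λ) (hvx : v ≠ x) :
    (∑' m : Bonds Λ → ℕ,
        if (∀ u : Λ, Odd (deg m u) ↔ Xor' (u = v) (u = x)) ∧
            (∀ b : Bonds Λ, ¬ (b.1.1 ∉ A ∧ b.1.2 ∉ A) → m b = 0) then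
          ∏ b ∈ Finset.univ.filter (fun b : Bonds Λ => b.1.1 ∉ A ∧ b.1.2 ∉ A),
            (Nat.choose (N b) (m b) : ℝ)
        else 0)
    = (if Relation.ReflTransGen
            (fun u w => u ∉ A ∧ w ∉ A ∧ ∃ b : Bonds Λ, 0 < N b ∧
              ((b.1.1 = u ∧ b.1.2 = w) ∨ (b.1.1 = w ∧ b.1.2 = u))) v x
        then 1 else 0) *
      ∑' m : Bonds Λ → ℕ,
        if (∀ u : Λ, Even (deg m u)) ∧
            (∀ b : Bonds Λ, ¬ (b.1.1 ∉ A ∧ b.1.2 ∉ A) → m b = 0) then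
          ∏ b ∈ Finset.univ.filter (fun b : Bonds Λ => b.1.1 ∉ A ∧ b.1.2 ∉ A),
            (Nat.choose (N b) (m b) : ℝ)
        else 0 := by
  have h1 := tsum_eq_card N A
    (fun m => (∀ u : Λ, Odd (deg m u) ↔ Xor' (u = v) (u = x)) ∧
      (∀ b : Bonds Λ, ¬ (b.1.1 ∉ A ∧ b.1.2 ∉ A) → m b = 0))
    (fun m h => h.2)
  have h2 := tsum_eq_card N A
    (fun m => (∀ u : Λ, Even (deg m u)) ∧
      (∀ b : Bonds Λ, ¬ (b.1.1 ∉ A ∧ b.1.2 ∉ A) → m b = 0))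
    (fun m h => h.2)
  beta_reduce at h1 h2
  have e1 : (∑' m : Bonds Λ → ℕ,
      if (∀ u : Λ, Odd (deg m u) ↔ Xor' (u = v) (u = x)) ∧
          (∀ b : Bonds Λ, ¬ (b.1.1 ∉ A ∧ b.1.2 ∉ A) → m b = 0) then
        ∏ b ∈ Finset.univ.filter (fun b : Bonds Λ => b.1.1 ∉ A ∧ b.1.2 ∉ A),
          (Nat.choose (N b) (m b) : ℝ)
      else 0)
      = ((Finset.univ.filter (fun f : ∀ b : Bonds Λ, Finset (Fin (N b)) =>
          (∀ u : Λ, Odd (deg (fun b => (f b).card) u) ↔ Xor' (u = v) (u = x)) ∧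
          (∀ b : Bonds Λ, ¬ (b.1.1 ∉ A ∧ b.1.2 ∉ A) → (f b).card = 0))).card : ℝ) := by
    refine (tsum_congr (fun m => ite_irrel _ _ _ _ _)).trans (h1.trans ?_)
    congr!
  have e2 : (∑' m : Bonds Λ → ℕ,
      if (∀ u : Λ, Even (deg m u)) ∧
          (∀ b : Bonds Λ, ¬ (b.1.1 ∉ A ∧ b.1.2 ∉ A) → m b = 0) then
        ∏ b ∈ Finset.univ.filter (fun b : Bonds Λ => b.1.1 ∉ A ∧ b.1.2 ∉ A),
          (Nat.choose (N b) (m b) : ℝ)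
      else 0)
      = ((Finset.univ.filter (fun f : ∀ b : Bonds Λ, Finset (Fin (N b)) =>
          (∀ u : Λ, Even (deg (fun b => (f b).card) u)) ∧
          (∀ b : Bonds Λ, ¬ (b.1.1 ∉ A ∧ b.1.2 ∉ A) → (f b).card = 0))).card : ℝ) := by
    refine (tsum_congr (fun m => ite_irrel _ _ _ _ _)).trans (h2.trans ?_)
    congr!
  rw [e1, e2]
  by_cases hconn : Relation.ReflTransGen
      (fun u w => u ∉ A ∧ w ∉ A ∧ ∃ b : Bonds Λ, 0 < N b ∧
        ((b.1.1 = u ∧ b.1.2 = w) ∨ (b.1.1 = w ∧ b.1.2 = u))) v x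
  · rw [if_pos hconn, one_mul]
    exact_mod_cast card_odd_eq_card_even N A hvx hconn
  · rw [if_neg hconn, zero_mul, Nat.cast_eq_zero, Finset.card_eq_zero,
      Finset.filter_eq_empty_iff]
    intro f _ hf
    exact no_odd_config N A hvx hconn f hf.1 hf.2
end

section
/- For the ferromagnetic Ising model on a finite graph Λ, the two-point function satisfies ⟨φ_y φ_x⟩_Λ ≤ δ_{y,x} + ∑_{b : b̄ = x} ⟨φ_y φ_{b̲}⟩_Λ · tanh(p J_b), where the sum is over directed bonds b = (b̲, b̄) with endpoint x. -/
set_option linter.unusedSectionVars false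
set_option linter.unnecessarySeqFocus false

open scoped BigOperators

/-- The zero-field Ising two-point function `⟨φ_a φ_c⟩_Λ` at inverse temperature `p`
with couplings `K`. -/
noncomputable def twoPt {Λ : Type} [Fintype Λ] [LinearOrder Λ]
    (p : ℝ) (K : Λ → Λ → ℝ) (a c : Λ) : ℝ :=
  (∑ φ : Λ → Bool, sp φ a * sp φ c *
      Real.exp (p * ∑ b : Bonds Λ, K b.1.1 b.1.2 * sp φ b.1.1 * sp φ b.1.2)) /
  (∑ φ : Λ → Bool,
      Real.exp (p * ∑ b : Bonds Λ, K b.1.1 b.1.2 * sp φ b.1.1 * sp φ b.1.2))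

namespace IsingAux

lemma tanh_nonneg {x : ℝ} (hx : 0 ≤ x) : 0 ≤ Real.tanh x := by
  rw [Real.tanh_eq_sinh_div_cosh]
  apply div_nonneg _ (Real.cosh_pos x).le
  rw [← Real.sinh_zero]; exact Real.sinh_le_sinh.2 hx

lemma sinh_nonneg {x : ℝ} (hx : 0 ≤ x) : 0 ≤ Real.sinh x := by
  rw [← Real.sinh_zero]; exact Real.sinh_le_sinh.2 hx

variable {Λ : Type} [Fintype Λ] [LinearOrder Λ]

lemma sp_cases (φ : Λ → Bool) (v : Λ) : sp φ v = 1 ∨ sp φ v = -1 := by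
  unfold sp; by_cases h : φ v <;> simp [h]

lemma sp_mul_self (φ : Λ → Bool) (v : Λ) : sp φ v * sp φ v = 1 := by
  rcases sp_cases φ v with h | h <;> rw [h] <;> norm_num

lemma abs_sp (φ : Λ → Bool) (v : Λ) : |sp φ v| = 1 := by
  rcases sp_cases φ v with h | h <;> rw [h] <;> norm_num

noncomputable def W (c : Bonds Λ → ℝ) (φ : Λ → Bool) : ℝ :=
  Real.exp (∑ b : Bonds Λ, c b * sp φ b.1.1 * sp φ b.1.2)

noncomputable def Psp (F : Λ → ℕ) (φ : Λ → Bool) : ℝ := ∏ v : Λ, (sp φ v) ^ (F v)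

noncomputable def Num (c : Bonds Λ → ℝ) (F : Λ → ℕ) : ℝ := ∑ φ : Λ → Bool, Psp F φ * W c φ

noncomputable def Corr (c : Bonds Λ → ℝ) (F : Λ → ℕ) : ℝ := Num c F / Num c 0

def eB (b : Bonds Λ) : Λ → ℕ := Pi.single b.1.1 1 + Pi.single b.1.2 1

lemma Psp_add (F G : Λ → ℕ) (φ : Λ → Bool) : Psp (F + G) φ = Psp F φ * Psp G φ := by
  unfold Psp
  rw [← Finset.prod_mul_distrib]
  exact Finset.prod_congr rfl fun v _ => by simp [pow_add]

lemma Psp_zero (φ : Λ → Bool) : Psp (0 : Λ → ℕ) φ = 1 := by simp [Psp]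

lemma Psp_single (u : Λ) (φ : Λ → Bool) : Psp (Pi.single u 1) φ = sp φ u := by
  unfold Psp
  rw [Finset.prod_eq_single u (fun v _ hv => by simp [Pi.single_eq_of_ne hv])
    (fun h => absurd (Finset.mem_univ u) h)]
  simp

lemma abs_Psp_le_one (F : Λ → ℕ) (φ : Λ → Bool) : |Psp F φ| ≤ 1 := by
  unfold Psp
  rw [Finset.abs_prod]
  apply le_of_eq
  apply Finset.prod_eq_one
  intro v _
  rw [abs_pow, abs_sp, one_pow]

lemma sp_update_self (φ : Λ → Bool) (v : Λ) : sp (Function.update φ v (!φ v)) v = -sp φ v := by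
  unfold sp
  by_cases h : φ v <;> simp [h]

lemma sp_update_ne (φ : Λ → Bool) (v w : Λ) (hw : w ≠ v) :
    sp (Function.update φ v (!φ v)) w = sp φ w := by
  unfold sp; rw [Function.update_of_ne hw]

lemma Psp_flip (F : Λ → ℕ) (φ : Λ → Bool) (v : Λ) (hodd : Odd (F v)) :
    Psp F (Function.update φ v (!φ v)) = -Psp F φ := by
  unfold Psp
  rw [← Finset.mul_prod_erase Finset.univ _ (Finset.mem_univ v),
      ← Finset.mul_prod_erase Finset.univ (fun w => (sp φ w) ^ (F w)) (Finset.mem_univ v)]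
  rw [sp_update_self, hodd.neg_pow]
  rw [Finset.prod_congr rfl (fun w hw => by
    rw [sp_update_ne φ v w (Finset.ne_of_mem_erase hw)])]
  ring

lemma sum_Psp_nonneg (F : Λ → ℕ) : 0 ≤ ∑ φ : Λ → Bool, Psp F φ := by
  by_cases h : ∀ v, Even (F v)
  · have : ∀ φ : Λ → Bool, Psp F φ = 1 := by
      intro φ
      apply Finset.prod_eq_one
      intro v _
      rcases h v with ⟨k, hk⟩
      have h2 : sp φ v ^ 2 = 1 := by
        rcases (show sp φ v = 1 ∨ sp φ v = -1 by unfold sp; by_cases hv : φ v <;> simp [hv]) with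
          h' | h' <;> rw [h'] <;> norm_num
      rw [hk, ← two_mul, pow_mul, h2, one_pow]
    simp [this]
  · push_neg at h
    obtain ⟨v, hv⟩ := h
    rw [Nat.not_even_iff_odd] at hv
    rw [Finset.sum_involution (fun φ _ => Function.update φ v (!φ v))]
    · intro φ _
      rw [Psp_flip F φ v hv]; ring
    · intro φ _ _
      intro hcon
      have := congrFun hcon v
      simp at this
    · intro φ _; exact Finset.mem_univ _
    · intro φ _
      simp [Function.update_idem]

lemma Psp_eB (b : Bonds Λ) (φ : Λ → Bool) : Psp (eB b) φ = sp φ b.1.1 * sp φ b.1.2 := by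
  rw [eB, Psp_add, Psp_single, Psp_single]

lemma exp_mul_pm (a s : ℝ) (hs : s = 1 ∨ s = -1) :
    Real.exp (a * s) = Real.cosh a + Real.sinh a * s := by
  rcases hs with h | h <;> rw [h]
  · rw [mul_one, mul_one, Real.cosh_add_sinh]
  · rw [mul_neg_one, mul_neg_one, ← sub_eq_add_neg, Real.cosh_sub_sinh]

lemma W_eq_prod (c : Bonds Λ → ℝ) (φ : Λ → Bool) :
    W c φ = ∏ b : Bonds Λ, (Real.cosh (c b) + Real.sinh (c b) * (sp φ b.1.1 * sp φ b.1.2)) := by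
  rw [W, Real.exp_sum]
  apply Finset.prod_congr rfl
  intro b _
  rw [mul_assoc, exp_mul_pm]
  rcases sp_cases φ b.1.1 with h1 | h1 <;> rcases sp_cases φ b.1.2 with h2 | h2 <;>
    rw [h1, h2] <;> norm_num

lemma Psp_finsetSum {ι : Type*} (t : Finset ι) (G : ι → Λ → ℕ) (φ : Λ → Bool) :
    Psp (∑ i ∈ t, G i) φ = ∏ i ∈ t, Psp (G i) φ := by
  classical
  induction t using Finset.induction_on with
  | empty => simp [Psp]
  | insert _ _ h ih => rw [Finset.sum_insert h, Finset.prod_insert h, Psp_add, ih]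

lemma num_nonneg (c : Bonds Λ → ℝ) (hc : ∀ b, 0 ≤ c b) (F : Λ → ℕ) : 0 ≤ Num c F := by
  classical
  have key : ∀ φ : Λ → Bool, Psp F φ * W c φ =
      ∑ t ∈ (Finset.univ : Finset (Bonds Λ)).powerset,
        ((∏ b ∈ t, Real.cosh (c b)) * ∏ b ∈ Finset.univ \ t, Real.sinh (c b)) *
          Psp (F + ∑ b ∈ Finset.univ \ t, eB b) φ := by
    intro φ
    rw [W_eq_prod, Finset.prod_add, Finset.mul_sum]
    apply Finset.sum_congr rfl
    intro t _
    rw [Psp_add, Psp_finsetSum]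
    rw [Finset.prod_mul_distrib]
    rw [Finset.prod_congr rfl (fun b _ => (Psp_eB b φ).symm)]
    ring
  rw [Num]
  rw [Finset.sum_congr rfl (fun φ _ => key φ), Finset.sum_comm]
  apply Finset.sum_nonneg
  intro t _
  rw [← Finset.mul_sum]
  apply mul_nonneg
  · apply mul_nonneg
    · exact Finset.prod_nonneg fun b _ => (Real.cosh_pos _).le
    · exact Finset.prod_nonneg fun b _ => sinh_nonneg (hc b)
  · exact sum_Psp_nonneg _

lemma sp_beq (φ t : Λ → Bool) (v : Λ) : sp (fun w => φ w == t w) v = sp φ v * sp t v := by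
  unfold sp
  cases hφ : φ v <;> cases ht : t v <;> simp [hφ, ht]

lemma Psp_beq (G : Λ → ℕ) (φ t : Λ → Bool) :
    Psp G (fun w => φ w == t w) = Psp G φ * Psp G t := by
  unfold Psp
  rw [← Finset.prod_mul_distrib]
  apply Finset.prod_congr rfl
  intro v _
  rw [sp_beq, mul_pow]

lemma comb_involutive (φ : Λ → Bool) :
    Function.Involutive (fun t : Λ → Bool => fun v => φ v == t v) := by
  intro t
  funext v
  show (φ v == (φ v == t v)) = t v
  cases φ v <;> cases t v <;> rfl

lemma W_mul_W (c : Bonds Λ → ℝ) (φ t : Λ → Bool) :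
    W c φ * W c (fun v => φ v == t v) =
      W (fun b => c b * (1 + sp t b.1.1 * sp t b.1.2)) φ := by
  rw [W, W, W, ← Real.exp_add, ← Finset.sum_add_distrib]
  congr 1
  apply Finset.sum_congr rfl
  intro b _
  rw [sp_beq, sp_beq]
  ring

lemma griffiths_II (c : Bonds Λ → ℝ) (hc : ∀ b, 0 ≤ c b) (F G : Λ → ℕ) :
    Num c F * Num c G ≤ Num c (F + G) * Num c 0 := by
  classical
  have expand : Num c (F + G) * Num c 0 - Num c F * Num c G =
      ∑ φ : Λ → Bool, ∑ ψ : Λ → Bool,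
        Psp F φ * (Psp G φ - Psp G ψ) * (W c φ * W c ψ) := by
    rw [Num, Num, Num, Num, Finset.sum_mul_sum, Finset.sum_mul_sum,
        ← Finset.sum_sub_distrib]
    apply Finset.sum_congr rfl
    intro φ _
    rw [← Finset.sum_sub_distrib]
    apply Finset.sum_congr rfl
    intro ψ _
    rw [Psp_add, Psp_zero]
    ring
  have inner : ∀ φ : Λ → Bool,
      (∑ ψ : Λ → Bool, Psp F φ * (Psp G φ - Psp G ψ) * (W c φ * W c ψ)) =
      ∑ t : Λ → Bool, Psp (F + G) φ * (1 - Psp G t) *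
        W (fun b => c b * (1 + sp t b.1.1 * sp t b.1.2)) φ := by
    intro φ
    refine (Fintype.sum_bijective (fun t : Λ → Bool => fun v => φ v == t v)
      (comb_involutive φ).bijective _ _ ?_).symm
    intro t
    rw [Psp_beq, W_mul_W, Psp_add]
    ring
  rw [Finset.sum_congr rfl (fun φ _ => inner φ), Finset.sum_comm] at expand
  have hnn : 0 ≤ Num c (F + G) * Num c 0 - Num c F * Num c G := by
    rw [expand]
    apply Finset.sum_nonneg
    intro t _
    have : (∑ φ : Λ → Bool, Psp (F + G) φ * (1 - Psp G t) *
        W (fun b => c b * (1 + sp t b.1.1 * sp t b.1.2)) φ) =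
        (1 - Psp G t) * Num (fun b => c b * (1 + sp t b.1.1 * sp t b.1.2)) (F + G) := by
      rw [Num, Finset.mul_sum]
      apply Finset.sum_congr rfl
      intro φ _
      ring
    rw [this]
    apply mul_nonneg
    · have := abs_Psp_le_one G t
      have := abs_le.mp this
      linarith [this.2]
    · apply num_nonneg
      intro b
      apply mul_nonneg (hc b)
      rcases sp_cases t b.1.1 with h1 | h1 <;> rcases sp_cases t b.1.2 with h2 | h2 <;>
        rw [h1, h2] <;> norm_num
  linarith

lemma Z_pos (c : Bonds Λ → ℝ) : 0 < Num c 0 := by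
  rw [Num]
  apply Finset.sum_pos
  · intro φ _
    rw [Psp_zero, one_mul]
    exact Real.exp_pos _
  · exact Finset.univ_nonempty

lemma corr_nonneg (c : Bonds Λ → ℝ) (hc : ∀ b, 0 ≤ c b) (F : Λ → ℕ) : 0 ≤ Corr c F :=
  div_nonneg (num_nonneg c hc F) (Z_pos c).le

lemma num_decomp (c : Bonds Λ → ℝ) (b0 : Bonds Λ) (F : Λ → ℕ) :
    Num c F = Real.cosh (c b0) * Num (Function.update c b0 0) F
      + Real.sinh (c b0) * Num (Function.update c b0 0) (F + eB b0) := by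
  classical
  set c' := Function.update c b0 0 with hc'def
  have hW : ∀ φ : Λ → Bool, W c φ =
      W c' φ * (Real.cosh (c b0) + Real.sinh (c b0) * (sp φ b0.1.1 * sp φ b0.1.2)) := by
    intro φ
    have hsum : (∑ b : Bonds Λ, c b * sp φ b.1.1 * sp φ b.1.2)
        = (∑ b : Bonds Λ, c' b * sp φ b.1.1 * sp φ b.1.2)
          + c b0 * (sp φ b0.1.1 * sp φ b0.1.2) := by
      have hterm : ∀ b : Bonds Λ, c b * sp φ b.1.1 * sp φ b.1.2 =
          c' b * sp φ b.1.1 * sp φ b.1.2 +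
            (if b = b0 then c b0 * (sp φ b0.1.1 * sp φ b0.1.2) else 0) := by
        intro b
        by_cases hb : b = b0
        · subst hb; simp [hc'def, Function.update_self]; ring
        · simp [hc'def, Function.update_of_ne hb, hb]
      rw [Finset.sum_congr rfl (fun b _ => hterm b), Finset.sum_add_distrib]
      simp
    rw [W, W, hsum, Real.exp_add, exp_mul_pm]
    rcases sp_cases φ b0.1.1 with h1 | h1 <;> rcases sp_cases φ b0.1.2 with h2 | h2 <;>
      rw [h1, h2] <;> norm_num
  rw [Num, Num, Num, Finset.mul_sum, Finset.mul_sum, ← Finset.sum_add_distrib]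
  apply Finset.sum_congr rfl
  intro φ _
  rw [hW φ, Psp_add, Psp_eB]
  ring

lemma update_nonneg (c : Bonds Λ → ℝ) (hc : ∀ b, 0 ≤ c b) (b0 : Bonds Λ) {r : ℝ} (hr : 0 ≤ r) :
    ∀ b, 0 ≤ Function.update c b0 r b := by
  intro b
  by_cases hb : b = b0
  · subst hb; simp [hr]
  · rw [Function.update_of_ne hb]; exact hc b

lemma corr_extract (c : Bonds Λ → ℝ) (hc : ∀ b, 0 ≤ c b) (b0 : Bonds Λ) (F : Λ → ℕ) :
    Corr c F ≤ Corr (Function.update c b0 0) F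
      + Real.tanh (c b0) * Corr (Function.update c b0 0) (F + eB b0) := by
  set c' := Function.update c b0 0 with hc'def
  have hc'0 : ∀ b, 0 ≤ c' b := update_nonneg c hc b0 le_rfl
  have hB := num_nonneg c' hc'0 (F + eB b0)
  have hZ := Z_pos c'
  have hch := Real.cosh_pos (c b0)
  have hsh := sinh_nonneg (hc b0)
  have hC := num_nonneg c' hc'0 ((0 : Λ → ℕ) + eB b0)
  have hdec0 := num_decomp c b0 0
  have h1 : Real.cosh (c b0) * Num c' 0 ≤ Num c 0 := by
    rw [hdec0]; nlinarith
  have h2 : Corr c F ≤ Num c F / (Real.cosh (c b0) * Num c' 0) := by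
    apply div_le_div_of_nonneg_left (num_nonneg c hc F) (by positivity) h1
  have h3 : Num c F / (Real.cosh (c b0) * Num c' 0)
      = Corr c' F + Real.tanh (c b0) * Corr c' (F + eB b0) := by
    rw [num_decomp c b0 F, Corr, Corr, Real.tanh_eq_sinh_div_cosh]
    field_simp
    ring
  rw [Corr] at h2 ⊢
  linarith [h2, h3.le, h3.ge]

lemma corr_mono_update (c : Bonds Λ → ℝ) (hc : ∀ b, 0 ≤ c b) (b0 : Bonds Λ) (r : ℝ)
    (hr : c b0 ≤ r) (F : Λ → ℕ) :
    Corr c F ≤ Corr (Function.update c b0 r) F := by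
  classical
  set c' := Function.update c b0 0 with hc'def
  have hc'0 : ∀ b, 0 ≤ c' b := update_nonneg c hc b0 le_rfl
  have key : Function.update (Function.update c b0 r) b0 0 = c' := by
    rw [Function.update_idem]
  have hval : Function.update c b0 r b0 = r := Function.update_self _ _ _
  have hdec1 := num_decomp c b0 F
  have hdec1' := num_decomp c b0 0
  have hdec2 := num_decomp (Function.update c b0 r) b0 F
  have hdec2' := num_decomp (Function.update c b0 r) b0 0
  rw [key, hval] at hdec2 hdec2'
  rw [zero_add] at hdec1' hdec2'
  set A := Num c' F
  set B := Num c' (F + eB b0)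
  set Z := Num c' 0
  set C := Num c' (eB b0)
  have hBZ : A * C ≤ B * Z := griffiths_II c' hc'0 F (eB b0)
  rw [Corr, Corr, div_le_div_iff₀ (Z_pos c) (Z_pos _)]
  rw [hdec1, hdec1', hdec2, hdec2']
  have hexpand : (Real.cosh r * A + Real.sinh r * B) * (Real.cosh (c b0) * Z + Real.sinh (c b0) * C)
      - (Real.cosh (c b0) * A + Real.sinh (c b0) * B) * (Real.cosh r * Z + Real.sinh r * C)
      = Real.sinh (r - c b0) * (B * Z - A * C) := by
    rw [Real.sinh_sub]; ring
  have hs : 0 ≤ Real.sinh (r - c b0) := sinh_nonneg (by linarith)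
  have hprod : 0 ≤ Real.sinh (r - c b0) * (B * Z - A * C) := by
    apply mul_nonneg hs
    linarith
  linarith [hexpand, hprod]

lemma corr_mono (c c' : Bonds Λ → ℝ) (hc : ∀ b, 0 ≤ c b) (hle : ∀ b, c b ≤ c' b) (F : Λ → ℕ) :
    Corr c F ≤ Corr c' F := by
  classical
  have key : ∀ S : Finset (Bonds Λ),
      Corr c F ≤ Corr (fun b => if b ∈ S then c' b else c b) F := by
    intro S
    induction S using Finset.induction_on with
    | empty => simp
    | @insert b0 S hb0 ih =>
      have hmixnn : ∀ b, 0 ≤ (fun b => if b ∈ S then c' b else c b) b := by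
        intro b
        by_cases hb : b ∈ S <;> simp [hb]
        · exact le_trans (hc b) (hle b)
        · exact hc b
      have hupd : Function.update (fun b => if b ∈ S then c' b else c b) b0 (c' b0)
          = fun b => if b ∈ insert b0 S then c' b else c b := by
        funext b
        by_cases hb : b = b0
        · subst hb; simp [Function.update_self]
        · rw [Function.update_of_ne hb]
          by_cases hbS : b ∈ S <;> simp [hbS, hb]
      have hstep := corr_mono_update (fun b => if b ∈ S then c' b else c b) hmixnn b0 (c' b0)
        (by simp [hb0]; exact hle b0) F
      rw [hupd] at hstep
      exact le_trans ih hstep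
  have := key Finset.univ
  simpa using this

lemma num_isolated (c : Bonds Λ → ℝ) (x y : Λ) (hyx : y ≠ x)
    (hciso : ∀ b : Bonds Λ, (b.1.1 = x ∨ b.1.2 = x) → c b = 0) :
    Num c (Pi.single y 1 + Pi.single x 1) = 0 := by
  classical
  rw [Num]
  apply Finset.sum_involution (fun φ _ => Function.update φ x (!φ x))
  · intro φ _
    have hodd : Odd ((Pi.single y 1 + Pi.single x 1 : Λ → ℕ) x) := by
      have h0 : (Pi.single y 1 : Λ → ℕ) x = 0 := Pi.single_eq_of_ne (Ne.symm hyx) 1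
      simp [h0]
    have hP := Psp_flip (Pi.single y 1 + Pi.single x 1) φ x hodd
    have hW : W c (Function.update φ x (!φ x)) = W c φ := by
      rw [W, W]
      congr 1
      apply Finset.sum_congr rfl
      intro b _
      by_cases hb : b.1.1 = x ∨ b.1.2 = x
      · rw [hciso b hb]; ring
      · push_neg at hb
        rw [sp_update_ne φ x _ hb.1, sp_update_ne φ x _ hb.2]
    rw [hP, hW]; ring
  · intro φ _ _ hcon
    have := congrFun hcon x
    simp at this
  · intro φ _; simp [Function.update_idem]
  · intro φ _; exact Finset.mem_univ _

def otherEnd (x : Λ) (b : Bonds Λ) : Λ := if b.1.1 = x then b.1.2 else b.1.1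

lemma twoPt_eq (p : ℝ) (J : Λ → Λ → ℝ) (a d : Λ) :
    twoPt p J a d = Corr (fun b => p * J b.1.1 b.1.2) (Pi.single a 1 + Pi.single d 1) := by
  have harg : ∀ φ : Λ → Bool,
      p * (∑ b : Bonds Λ, J b.1.1 b.1.2 * sp φ b.1.1 * sp φ b.1.2)
        = ∑ b : Bonds Λ, (fun b : Bonds Λ => p * J b.1.1 b.1.2) b * sp φ b.1.1 * sp φ b.1.2 := by
    intro φ
    rw [Finset.mul_sum]
    apply Finset.sum_congr rfl
    intro b _
    ring
  rw [twoPt, Corr, Num, Num]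
  congr 1
  · apply Finset.sum_congr rfl
    intro φ _
    rw [Psp_add, Psp_single, Psp_single, W, harg]
  · apply Finset.sum_congr rfl
    intro φ _
    rw [Psp_zero, one_mul, W, harg]

lemma corr_diag (c : Bonds Λ → ℝ) (x : Λ) :
    Corr c (Pi.single x 1 + Pi.single x 1) = 1 := by
  rw [Corr]
  have h : Num c (Pi.single x 1 + Pi.single x 1) = Num c 0 := by
    rw [Num, Num]
    apply Finset.sum_congr rfl
    intro φ _
    rw [Psp_add, Psp_single, sp_mul_self, Psp_zero]
  rw [h, div_self (Z_pos c).ne']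

lemma num_reduce (c : Bonds Λ → ℝ) (y x : Λ) (b : Bonds Λ) (hbx : b.1.1 = x ∨ b.1.2 = x) :
    Num c ((Pi.single y 1 + Pi.single x 1) + eB b)
      = Num c (Pi.single y 1 + Pi.single (otherEnd x b) 1) := by
  rw [Num, Num]
  apply Finset.sum_congr rfl
  intro φ _
  congr 1
  rw [Psp_add, Psp_add, Psp_eB, Psp_add, Psp_single, Psp_single, Psp_single]
  rcases hbx with h | h
  · rw [otherEnd, if_pos h, h]
    have h2 := sp_mul_self φ x
    linear_combination sp φ y * sp φ b.1.2 * h2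
  · have hne : b.1.1 ≠ x := by
      intro hcon
      have hlt := b.2
      rw [hcon, h] at hlt
      exact lt_irrefl x hlt
    rw [otherEnd, if_neg hne, h]
    have h2 := sp_mul_self φ x
    linear_combination sp φ y * sp φ b.1.1 * h2

lemma main_induct (c : Bonds Λ → ℝ) (hc : ∀ b, 0 ≤ c b) (y x : Λ) (S : Finset (Bonds Λ)) :
    (∀ b ∈ S, b.1.1 = x ∨ b.1.2 = x) →
    Corr c (Pi.single y 1 + Pi.single x 1) ≤
      Corr (fun b => if b ∈ S then 0 else c b) (Pi.single y 1 + Pi.single x 1) +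
      ∑ b ∈ S, Real.tanh (c b) * Corr c (Pi.single y 1 + Pi.single (otherEnd x b) 1) := by
  classical
  induction S using Finset.induction_on with
  | empty => intro _; simp
  | @insert b0 S hb0 ih =>
    intro hS
    have hS' : ∀ b ∈ S, b.1.1 = x ∨ b.1.2 = x := fun b hb => hS b (Finset.mem_insert_of_mem hb)
    have hb0x : b0.1.1 = x ∨ b0.1.2 = x := hS b0 (Finset.mem_insert_self b0 S)
    have hcS : ∀ b, 0 ≤ (fun b => if b ∈ S then 0 else c b) b := by
      intro b
      by_cases hb : b ∈ S <;> simp [hb, hc b]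
    have hupd : Function.update (fun b => if b ∈ S then 0 else c b) b0 0
        = fun b => if b ∈ insert b0 S then 0 else c b := by
      funext b
      by_cases hb : b = b0
      · subst hb; simp
      · rw [Function.update_of_ne hb]
        by_cases hbS : b ∈ S <;> simp [hbS, hb]
    have hext := corr_extract (fun b => if b ∈ S then 0 else c b) hcS b0
      (Pi.single y 1 + Pi.single x 1)
    rw [hupd] at hext
    rw [if_neg hb0] at hext
    have hred : Corr (fun b => if b ∈ insert b0 S then 0 else c b)
        ((Pi.single y 1 + Pi.single x 1) + eB b0)
        = Corr (fun b => if b ∈ insert b0 S then 0 else c b)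
            (Pi.single y 1 + Pi.single (otherEnd x b0) 1) := by
      rw [Corr, Corr, num_reduce _ y x b0 hb0x]
    rw [hred] at hext
    have hleS : ∀ b, (fun b => if b ∈ insert b0 S then 0 else c b) b ≤ c b := by
      intro b
      by_cases hb : b ∈ insert b0 S <;> simp [hb, hc b]
    have hnnS : ∀ b, 0 ≤ (fun b => if b ∈ insert b0 S then 0 else c b) b := by
      intro b
      by_cases hb : b ∈ insert b0 S <;> simp [hb, hc b]
    have hmono := corr_mono (fun b => if b ∈ insert b0 S then 0 else c b) c hnnS hleS
      (Pi.single y 1 + Pi.single (otherEnd x b0) 1)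
    have htanh : 0 ≤ Real.tanh (c b0) := tanh_nonneg (hc b0)
    have hmul : Real.tanh (c b0) * Corr (fun b => if b ∈ insert b0 S then 0 else c b)
          (Pi.single y 1 + Pi.single (otherEnd x b0) 1)
        ≤ Real.tanh (c b0) * Corr c (Pi.single y 1 + Pi.single (otherEnd x b0) 1) :=
      mul_le_mul_of_nonneg_left hmono htanh
    rw [Finset.sum_insert hb0]
    have hihS := ih hS'
    linarith


end IsingAux

open IsingAux

/-- for the ferromagnetic Ising model on a finite graph `Λ`,
`⟨φ_y φ_x⟩_Λ ≤ δ_{y,x} + ∑_{b : b̄ = x} ⟨φ_y φ_{b̲}⟩_Λ tanh (p J_b)`,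
the sum being over the directed bonds `b = (b̲, b̄)` with endpoint `b̄ = x`. -/
theorem two_point_tanh_bound
    {Λ : Type} [Fintype Λ] [LinearOrder Λ]
    (p : ℝ) (hp : 0 ≤ p) (J : Λ → Λ → ℝ) (hJ : ∀ u w, 0 ≤ J u w) (y x : Λ) :
    twoPt p J y x ≤ (if y = x then 1 else 0) +
      ∑ b : Bonds Λ,
        ((if b.1.2 = x then twoPt p J y b.1.1 * Real.tanh (p * J b.1.1 b.1.2) else 0) +
          (if b.1.1 = x then twoPt p J y b.1.2 * Real.tanh (p * J b.1.1 b.1.2) else 0)) := by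
  classical
  set c : Bonds Λ → ℝ := fun b => p * J b.1.1 b.1.2 with hcdef
  have hc : ∀ b : Bonds Λ, 0 ≤ c b := fun b => mul_nonneg hp (hJ _ _)
  have hsumnn : 0 ≤ ∑ b : Bonds Λ,
      ((if b.1.2 = x then twoPt p J y b.1.1 * Real.tanh (p * J b.1.1 b.1.2) else 0) +
        (if b.1.1 = x then twoPt p J y b.1.2 * Real.tanh (p * J b.1.1 b.1.2) else 0)) := by
    apply Finset.sum_nonneg
    intro b _
    have hA : ∀ d e f : Λ, 0 ≤ twoPt p J y d * Real.tanh (p * J e f) := by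
      intro d e f
      apply mul_nonneg
      · rw [twoPt_eq]; exact corr_nonneg _ hc _
      · exact tanh_nonneg (mul_nonneg hp (hJ _ _))
    apply add_nonneg
    · by_cases h : b.1.2 = x <;> simp [h] <;> exact hA _ _ _
    · by_cases h : b.1.1 = x <;> simp [h] <;> exact hA _ _ _
  by_cases hyx : y = x
  · subst hyx
    rw [if_pos rfl, twoPt_eq]
    have hd := corr_diag (fun b : Bonds Λ => p * J b.1.1 b.1.2) y
    linarith
  · rw [if_neg hyx]
    set S : Finset (Bonds Λ) := Finset.univ.filter (fun b => b.1.1 = x ∨ b.1.2 = x) with hSdef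
    have hS : ∀ b ∈ S, b.1.1 = x ∨ b.1.2 = x := by
      intro b hb
      exact (Finset.mem_filter.mp hb).2
    have hmain := main_induct c hc y x S hS
    have hzero : Corr (fun b => if b ∈ S then 0 else c b) (Pi.single y 1 + Pi.single x 1) = 0 := by
      rw [Corr, num_isolated _ x y hyx, zero_div]
      intro b hb
      have : b ∈ S := by
        rw [hSdef]
        exact Finset.mem_filter.mpr ⟨Finset.mem_univ b, hb⟩
      simp [this]
    rw [hzero, zero_add] at hmain
    have hsum : (∑ b ∈ S, Real.tanh (c b) * Corr c (Pi.single y 1 + Pi.single (otherEnd x b) 1))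
        = ∑ b : Bonds Λ,
          ((if b.1.2 = x then twoPt p J y b.1.1 * Real.tanh (p * J b.1.1 b.1.2) else 0) +
            (if b.1.1 = x then twoPt p J y b.1.2 * Real.tanh (p * J b.1.1 b.1.2) else 0)) := by
      rw [hSdef, Finset.sum_filter]
      apply Finset.sum_congr rfl
      intro b _
      by_cases h1 : b.1.1 = x <;> by_cases h2 : b.1.2 = x
      · exfalso
        have hlt := b.2
        rw [h1, h2] at hlt
        exact lt_irrefl x hlt
      · rw [if_pos (Or.inl h1), if_neg h2, if_pos h1, otherEnd, if_pos h1]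
        rw [twoPt_eq, zero_add, mul_comm]
      · rw [if_pos (Or.inr h2), if_neg h1, if_pos h2, otherEnd, if_neg h1]
        rw [twoPt_eq, add_zero, mul_comm]
      · rw [if_neg (by tauto), if_neg h1, if_neg h2, add_zero]
    rw [hsum] at hmain
    rw [zero_add, twoPt_eq]
    exact hmain
end

section
/- Star convolution bound: let d ≥ 1 and q ∈ (d/2, d). Then there exists a constant C' = C'(d,q) such that for all x, x', y, y' ∈ ℤ^d, ∑_{z ∈ ℤ^d} ⟨x − z⟩^{−q} ⟨x' − z⟩^{−q} ⟨z − y⟩^{−q} ⟨z − y'⟩^{−q} ≤ C' ⟨x − y⟩^{−q} ⟨x' − y'⟩^{−q}, where ⟨z⟩ = max(|z|, 1). -/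
open scoped BigOperators

/-- `⟨z⟩ = max (|z|, 1)` with `|z|` the Euclidean norm of `z ∈ ℤ^d`. -/
noncomputable def jnorm {d : ℕ} (z : Fin d → ℤ) : ℝ :=
  max (Real.sqrt (∑ i, ((z i : ℝ)) ^ 2)) 1

lemma one_le_jnorm {d : ℕ} (z : Fin d → ℤ) : 1 ≤ jnorm z := le_max_right _ _

lemma jnorm_pos {d : ℕ} (z : Fin d → ℤ) : 0 < jnorm z :=
  lt_of_lt_of_le one_pos (one_le_jnorm z)

/-- 1-dimensional building block. -/
noncomputable def m1 (n : ℤ) : ℝ := max |(n : ℝ)| 1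

lemma one_le_m1 (n : ℤ) : 1 ≤ m1 n := le_max_right _ _

lemma m1_pos (n : ℤ) : 0 < m1 n := lt_of_lt_of_le one_pos (one_le_m1 n)

lemma summable_m1_rpow {s : ℝ} (hs : 1 < s) : Summable (fun n : ℤ => m1 n ^ (-s)) := by
  have h := Real.summable_abs_int_rpow hs
  rw [← Finset.summable_compl_iff ({0} : Finset ℤ)]
  rw [← Finset.summable_compl_iff ({0} : Finset ℤ)] at h
  refine h.congr fun ⟨n, hn⟩ => ?_
  simp only [Finset.mem_singleton] at hn
  have hn' : (1:ℝ) ≤ |(n:ℝ)| := by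
    have : (1:ℤ) ≤ |n| := Int.one_le_abs hn
    calc (1:ℝ) ≤ |n| := by exact_mod_cast this
    _ = |(n:ℝ)| := by push_cast [Int.cast_abs]; ring
  simp [m1, max_eq_left hn']

lemma m1_le_jnorm {d : ℕ} (z : Fin d → ℤ) (i : Fin d) : m1 (z i) ≤ jnorm z := by
  refine max_le_max ?_ le_rfl
  have h1 : ((z i : ℝ)) ^ 2 ≤ ∑ j, ((z j : ℝ)) ^ 2 :=
    Finset.single_le_sum (f := fun j => ((z j : ℝ)) ^ 2) (fun j _ => sq_nonneg _) (Finset.mem_univ i)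
  calc |(z i : ℝ)| = Real.sqrt (((z i : ℝ)) ^ 2) := (Real.sqrt_sq_eq_abs _).symm
  _ ≤ _ := Real.sqrt_le_sqrt h1

lemma prod_m1_le {d : ℕ} (z : Fin d → ℤ) : ∏ i, m1 (z i) ≤ jnorm z ^ d := by
  calc ∏ i, m1 (z i) ≤ ∏ _i : Fin d, jnorm z :=
        Finset.prod_le_prod (fun i _ => (m1_pos _).le) (fun i _ => m1_le_jnorm z i)
  _ = jnorm z ^ d := by simp

/-- comparison: `jnorm z ^ (-p) ≤ ∏ i, m1 (z i) ^ (-p/d)` for `p > 0`, `d ≥ 1`. -/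
lemma jnorm_rpow_le {d : ℕ} (hd : 1 ≤ d) {p : ℝ} (hp : 0 < p) (z : Fin d → ℤ) :
    jnorm z ^ (-p) ≤ ∏ i, m1 (z i) ^ (-(p / d)) := by
  have hdpos : (0:ℝ) < d := by exact_mod_cast hd
  have hprod_pos : (0:ℝ) < ∏ i, m1 (z i) := Finset.prod_pos fun i _ => m1_pos _
  have key : (∏ i, m1 (z i)) ^ (p / d) ≤ (jnorm z ^ (d:ℕ)) ^ (p / d) :=
    Real.rpow_le_rpow hprod_pos.le (prod_m1_le z) (by positivity)
  have h2 : (jnorm z ^ (d:ℕ)) ^ (p / d) = jnorm z ^ p := by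
    rw [← Real.rpow_natCast (jnorm z) d, ← Real.rpow_mul (jnorm_pos z).le]
    congr 1
    field_simp
  have h3 : (∏ i, m1 (z i)) ^ (p / d) = ∏ i, m1 (z i) ^ (p / d) := by
    rw [← Real.finset_prod_rpow _ _ (fun i _ => (m1_pos _).le)]
  have h4 : jnorm z ^ (-p) = (jnorm z ^ p)⁻¹ := by
    rw [Real.rpow_neg (jnorm_pos z).le]
  rw [h4]
  have h5 : (∏ i, m1 (z i) ^ (p / d))⁻¹ = ∏ i, m1 (z i) ^ (-(p / d)) := by
    rw [← Finset.prod_inv_distrib]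
    exact Finset.prod_congr rfl fun i _ => (Real.rpow_neg (m1_pos _).le _).symm
  rw [← h5]
  apply inv_anti₀
  · rw [← h3]; positivity
  · rw [← h2, ← h3]; exact key

/-- summability of coordinatewise products over `Fin d → ℤ`. -/
lemma summable_pi_prod {g : ℤ → ℝ} (hg : Summable g) (hg0 : ∀ n, 0 ≤ g n) (d : ℕ) :
    Summable (fun z : Fin d → ℤ => ∏ i, g (z i)) := by
  induction d with
  | zero => exact Summable.of_finite
  | succ n ih =>
      have h := (hg.mul_of_nonneg ih hg0 (fun z => Finset.prod_nonneg fun i _ => hg0 _))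
      have := h.comp_injective (Fin.consEquiv fun _ : Fin (n+1) => ℤ).symm.injective
      refine this.congr fun z => ?_
      rw [Function.comp_apply, Fin.prod_univ_succ]
      rfl

lemma summable_jnorm_rpow {d : ℕ} (hd : 1 ≤ d) {p : ℝ} (hp : (d:ℝ) < p) :
    Summable (fun z : Fin d → ℤ => jnorm z ^ (-p)) := by
  have hdpos : (0:ℝ) < d := by exact_mod_cast hd
  have hs : 1 < p / d := (one_lt_div hdpos).mpr hp
  have hp0 : 0 < p := lt_trans hdpos hp
  have h1 : Summable (fun n : ℤ => m1 n ^ (-(p/d))) := summable_m1_rpow hs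
  have h2 := summable_pi_prod h1 (fun n => Real.rpow_nonneg (m1_pos n).le _) d
  exact h2.of_nonneg_of_le (fun z => Real.rpow_nonneg (jnorm_pos z).le _)
    (fun z => jnorm_rpow_le hd hp0 z)

/-- triangle inequality for jnorm. -/
lemma jnorm_add_le {d : ℕ} (u v : Fin d → ℤ) : jnorm (u + v) ≤ jnorm u + jnorm v := by
  set φ : (Fin d → ℤ) → EuclideanSpace ℝ (Fin d) := fun w => WithLp.toLp 2 (fun i => (w i : ℝ)) with hφ
  have hn : ∀ w : Fin d → ℤ, Real.sqrt (∑ i, ((w i : ℝ)) ^ 2) = ‖φ w‖ := by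
    intro w
    rw [EuclideanSpace.norm_eq]
    congr 1
    exact Finset.sum_congr rfl fun i _ => by rw [hφ]; simp [sq_abs]
  have hadd : φ (u + v) = φ u + φ v := by
    ext i; simp [hφ]
  rw [jnorm, jnorm, jnorm, hn, hn, hn, hadd]
  rcases max_cases (‖φ u + φ v‖) 1 with ⟨h1, _⟩ | ⟨h1, _⟩
  · rw [h1]
    calc ‖φ u + φ v‖ ≤ ‖φ u‖ + ‖φ v‖ := norm_add_le _ _
    _ ≤ _ := add_le_add (le_max_left _ _) (le_max_left _ _)
  · rw [h1]
    calc (1:ℝ) ≤ 1 + 1 := by norm_num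
    _ ≤ _ := add_le_add (le_max_right _ _) (le_max_right _ _)

/-- key pointwise bound: if `c ≤ a + b` with `a, b, c ≥ 1` and `q > 0` then
`a^(-q) * b^(-q) ≤ 2^q * c^(-q) * (a^(-q) + b^(-q))`. -/
lemma pointwise_bound {a b c q : ℝ} (hq : 0 < q) (ha : 1 ≤ a) (hb : 1 ≤ b) (hc : 1 ≤ c)
    (htri : c ≤ a + b) : a ^ (-q) * b ^ (-q) ≤ 2 ^ q * c ^ (-q) * (a ^ (-q) + b ^ (-q)) := by
  have ha0 : (0:ℝ) < a := lt_of_lt_of_le one_pos ha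
  have hb0 : (0:ℝ) < b := lt_of_lt_of_le one_pos hb
  have hc0 : (0:ℝ) < c := lt_of_lt_of_le one_pos hc
  rcases le_total a b with hab | hab
  · -- b is the max, c/2 ≤ b
    have hmax : c / 2 ≤ b := by linarith
    have h1 : b ^ (-q) ≤ (c / 2) ^ (-q) :=
      Real.rpow_le_rpow_of_nonpos (by linarith) hmax (by linarith)
    have h2 : (c / 2) ^ (-q) = 2 ^ q * c ^ (-q) := by
      rw [show c / 2 = c * 2⁻¹ by ring, Real.mul_rpow hc0.le (by norm_num),
        Real.inv_rpow (by norm_num), ← Real.rpow_neg (by norm_num), neg_neg, mul_comm]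
    calc a ^ (-q) * b ^ (-q) ≤ a ^ (-q) * (2 ^ q * c ^ (-q)) := by
          apply mul_le_mul_of_nonneg_left _ (Real.rpow_nonneg ha0.le _)
          rw [← h2]; exact h1
    _ = 2 ^ q * c ^ (-q) * a ^ (-q) := by ring
    _ ≤ 2 ^ q * c ^ (-q) * (a ^ (-q) + b ^ (-q)) := by
          apply mul_le_mul_of_nonneg_left _ (by positivity)
          have := Real.rpow_nonneg hb0.le (-q); linarith
  · have hmax : c / 2 ≤ a := by linarith
    have h1 : a ^ (-q) ≤ (c / 2) ^ (-q) :=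
      Real.rpow_le_rpow_of_nonpos (by linarith) hmax (by linarith)
    have h2 : (c / 2) ^ (-q) = 2 ^ q * c ^ (-q) := by
      rw [show c / 2 = c * 2⁻¹ by ring, Real.mul_rpow hc0.le (by norm_num),
        Real.inv_rpow (by norm_num), ← Real.rpow_neg (by norm_num), neg_neg, mul_comm]
    calc a ^ (-q) * b ^ (-q) ≤ (2 ^ q * c ^ (-q)) * b ^ (-q) := by
          apply mul_le_mul_of_nonneg_right _ (Real.rpow_nonneg hb0.le _)
          rw [← h2]; exact h1
    _ ≤ 2 ^ q * c ^ (-q) * (a ^ (-q) + b ^ (-q)) := by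
          apply mul_le_mul_of_nonneg_left _ (by positivity)
          have := Real.rpow_nonneg ha0.le (-q); linarith

/-- star convolution bound: for `d ≥ 1` and `q ∈ (d/2, d)` there is
`C' = C'(d,q)` with
`∑_{z ∈ ℤ^d} ⟨x−z⟩^{−q} ⟨x'−z⟩^{−q} ⟨z−y⟩^{−q} ⟨z−y'⟩^{−q} ≤ C' ⟨x−y⟩^{−q} ⟨x'−y'⟩^{−q}`
for all `x, x', y, y' ∈ ℤ^d`. -/
theorem star_convolution_bound
    (d : ℕ) (hd : 1 ≤ d) (q : ℝ) (hq1 : (d : ℝ) / 2 < q) (hq2 : q < d) :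
    ∃ C' : ℝ, ∀ x x' y y' : Fin d → ℤ,
      (∑' z : Fin d → ℤ,
          jnorm (x - z) ^ (-q) * jnorm (x' - z) ^ (-q) *
            jnorm (z - y) ^ (-q) * jnorm (z - y') ^ (-q))
        ≤ C' * jnorm (x - y) ^ (-q) * jnorm (x' - y') ^ (-q) := by
  have hdpos : (0:ℝ) < d := by exact_mod_cast hd
  have hq0 : 0 < q := lt_trans (by positivity) hq1
  have h2q : (d:ℝ) < 2 * q := by linarith
  -- base summable function
  have hSsum : Summable (fun z : Fin d → ℤ => jnorm z ^ (-(2*q))) := summable_jnorm_rpow hd h2q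
  set S : ℝ := ∑' z : Fin d → ℤ, jnorm z ^ (-(2*q)) with hS
  have hS0 : 0 ≤ S := tsum_nonneg fun z => Real.rpow_nonneg (jnorm_pos z).le _
  refine ⟨4 ^ q * (4 * S), fun x x' y y' => ?_⟩
  set c := jnorm (x - y) with hc
  set c' := jnorm (x' - y') with hc'
  have hc0 : 0 < c := jnorm_pos _
  have hc'0 : 0 < c' := jnorm_pos _
  set K : ℝ := 4 ^ q * c ^ (-q) * c' ^ (-q) with hK
  have hKnn : 0 ≤ K := by
    rw [hK]
    exact mul_nonneg (mul_nonneg (Real.rpow_nonneg (by norm_num) _)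
      (Real.rpow_nonneg hc0.le _)) (Real.rpow_nonneg hc'0.le _)
  -- translated summable functions and their tsums
  have hsumL : ∀ w : Fin d → ℤ, Summable (fun z : Fin d → ℤ => jnorm (w - z) ^ (-(2*q))) := by
    intro w
    exact (Equiv.subLeft w).summable_iff.mpr hSsum |>.congr fun z => rfl
  have hsumR : ∀ w : Fin d → ℤ, Summable (fun z : Fin d → ℤ => jnorm (z - w) ^ (-(2*q))) := by
    intro w
    exact (Equiv.subRight w).summable_iff.mpr hSsum |>.congr fun z => rfl
  have htsumL : ∀ w : Fin d → ℤ, (∑' z : Fin d → ℤ, jnorm (w - z) ^ (-(2*q))) = S := by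
    intro w
    rw [hS, ← (Equiv.subLeft w).tsum_eq (fun z => jnorm z ^ (-(2*q)))]
    rfl
  have htsumR : ∀ w : Fin d → ℤ, (∑' z : Fin d → ℤ, jnorm (z - w) ^ (-(2*q))) = S := by
    intro w
    rw [hS, ← (Equiv.subRight w).tsum_eq (fun z => jnorm z ^ (-(2*q)))]
    rfl
  -- majorant
  set h : (Fin d → ℤ) → ℝ := fun z =>
    jnorm (x - z) ^ (-(2*q)) + jnorm (z - y) ^ (-(2*q)) +
      jnorm (x' - z) ^ (-(2*q)) + jnorm (z - y') ^ (-(2*q)) with hh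
  have hhsum : Summable h := (((hsumL x).add (hsumR y)).add (hsumL x')).add (hsumR y')
  have hhts : (∑' z, h z) = 4 * S := by
    rw [hh]
    rw [Summable.tsum_add (((hsumL x).add (hsumR y)).add (hsumL x')) (hsumR y'),
        Summable.tsum_add ((hsumL x).add (hsumR y)) (hsumL x'),
        Summable.tsum_add (hsumL x) (hsumR y), htsumL, htsumR, htsumL, htsumR]
    ring
  -- pointwise bound for the big summand
  have hpt : ∀ z : Fin d → ℤ,
      jnorm (x - z) ^ (-q) * jnorm (x' - z) ^ (-q) * jnorm (z - y) ^ (-q) * jnorm (z - y') ^ (-q)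
        ≤ K * h z := by
    intro z
    set A := jnorm (x - z) ^ (-q) with hA
    set B := jnorm (z - y) ^ (-q) with hB
    set A' := jnorm (x' - z) ^ (-q) with hA'
    set B' := jnorm (z - y') ^ (-q) with hB'
    have hAnn : 0 ≤ A := Real.rpow_nonneg (jnorm_pos _).le _
    have hBnn : 0 ≤ B := Real.rpow_nonneg (jnorm_pos _).le _
    have hA'nn : 0 ≤ A' := Real.rpow_nonneg (jnorm_pos _).le _
    have hB'nn : 0 ≤ B' := Real.rpow_nonneg (jnorm_pos _).le _
    have htri1 : c ≤ jnorm (x - z) + jnorm (z - y) := by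
      have : x - y = (x - z) + (z - y) := by ring
      rw [hc, this]; exact jnorm_add_le _ _
    have htri2 : c' ≤ jnorm (x' - z) + jnorm (z - y') := by
      have : x' - y' = (x' - z) + (z - y') := by ring
      rw [hc', this]; exact jnorm_add_le _ _
    have hb1 : A * B ≤ 2 ^ q * c ^ (-q) * (A + B) :=
      pointwise_bound hq0 (one_le_jnorm _) (one_le_jnorm _) (one_le_jnorm _) htri1
    have hb2 : A' * B' ≤ 2 ^ q * c' ^ (-q) * (A' + B') :=
      pointwise_bound hq0 (one_le_jnorm _) (one_le_jnorm _) (one_le_jnorm _) htri2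
    have hsq : ∀ w : Fin d → ℤ, (jnorm w ^ (-q)) ^ 2 = jnorm w ^ (-(2*q)) := by
      intro w
      rw [← Real.rpow_natCast (jnorm w ^ (-q)) 2, ← Real.rpow_mul (jnorm_pos w).le]
      congr 1
      push_cast
      ring
    have hcross : (A + B) * (A' + B') ≤ A^2 + B^2 + A'^2 + B'^2 := by
      nlinarith [sq_nonneg (A + B - A' - B'), sq_nonneg (A - B), sq_nonneg (A' - B')]
    have step1 : A * A' * B * B' = (A * B) * (A' * B') := by ring
    have h4 : (4:ℝ) ^ q = 2 ^ q * 2 ^ q := by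
      rw [show (4:ℝ) = 2 * 2 by norm_num, Real.mul_rpow (by norm_num) (by norm_num)]
    have h2q0 : (0:ℝ) ≤ 2 ^ q := Real.rpow_nonneg (by norm_num) _
    have hfac1 : (0:ℝ) ≤ 2 ^ q * c ^ (-q) * (A + B) :=
      mul_nonneg (mul_nonneg h2q0 (Real.rpow_nonneg hc0.le _)) (by linarith)
    calc A * A' * B * B' = (A * B) * (A' * B') := step1
    _ ≤ (2 ^ q * c ^ (-q) * (A + B)) * (2 ^ q * c' ^ (-q) * (A' + B')) :=
        mul_le_mul hb1 hb2 (mul_nonneg hA'nn hB'nn) hfac1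
    _ = (2 ^ q * 2 ^ q) * c ^ (-q) * c' ^ (-q) * ((A + B) * (A' + B')) := by ring
    _ = 4 ^ q * c ^ (-q) * c' ^ (-q) * ((A + B) * (A' + B')) := by rw [h4]
    _ ≤ K * (A^2 + B^2 + A'^2 + B'^2) := by
        rw [hK]
        exact mul_le_mul_of_nonneg_left hcross (by rw [← hK]; exact hKnn)
    _ = K * h z := by
        rw [hh, hA, hB, hA', hB', hsq, hsq, hsq, hsq]
  -- conclude
  have hFnn : ∀ z : Fin d → ℤ,
      0 ≤ jnorm (x - z) ^ (-q) * jnorm (x' - z) ^ (-q) * jnorm (z - y) ^ (-q) *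
        jnorm (z - y') ^ (-q) := by
    intro z
    exact mul_nonneg (mul_nonneg (mul_nonneg (Real.rpow_nonneg (jnorm_pos _).le _)
      (Real.rpow_nonneg (jnorm_pos _).le _)) (Real.rpow_nonneg (jnorm_pos _).le _))
      (Real.rpow_nonneg (jnorm_pos _).le _)
  have hFsum : Summable (fun z : Fin d → ℤ =>
      jnorm (x - z) ^ (-q) * jnorm (x' - z) ^ (-q) * jnorm (z - y) ^ (-q) *
        jnorm (z - y') ^ (-q)) :=
    Summable.of_nonneg_of_le hFnn hpt (hhsum.mul_left K)
  calc (∑' z : Fin d → ℤ,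
          jnorm (x - z) ^ (-q) * jnorm (x' - z) ^ (-q) *
            jnorm (z - y) ^ (-q) * jnorm (z - y') ^ (-q))
      ≤ ∑' z, K * h z := Summable.tsum_le_tsum hpt hFsum (hhsum.mul_left K)
  _ = K * (4 * S) := by rw [tsum_mul_left, hhts]
  _ = 4 ^ q * (4 * S) * c ^ (-q) * c' ^ (-q) := by rw [hK]; ring
end
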